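/- arXiv:2604.05692 — 11 statements merged into one kernel-verified Lean document; each statement's English description precedes it below -/
import Mathlib

section
/- Let q be a prime power, r ≥ 2, ℓ ≥ 1, n ≥ 1 integers, and let H_1, …, H_n be ℓ-dimensional 𝔽_q-subspaces of V = 𝔽_q^{rℓ} satisfying the r-wise spanning condition. Fix i ∈ {1,…,n} and let W ≤ V be any 𝔽_q-subspace with dim W = (r-1)ℓ. For j ≠ i set t_j := dim(W ∩ H_j). Then ∑_{j≠i} (q^{t_j} − 1)/(q − 1) ≤ (r−1)·(q^ℓ − 1)/(q − 1). -/
open Module Finset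

/-- Proposition: dual counting, main inequality.
Let `q` be a prime power (realized as the cardinality of a finite field `F`),
`r ≥ 2`, `ℓ ≥ 1`, `n ≥ 1`, and let `H 1, …, H n` be `ℓ`-dimensional `F`-subspaces
of `V = F^{rℓ}` satisfying the `r`-wise spanning condition. Fix `i` and a subspace
`W` with `dim W = (r-1)ℓ`. With `t_j = dim (W ⊓ H j)`, we have
`∑_{j ≠ i} (q^{t_j} - 1)/(q - 1) ≤ (r - 1)·(q^ℓ - 1)/(q - 1)`
(all divisions are exact). -/
theorem incidence_multiplicity_projective_count
    (q r ℓ n : ℕ) (hr : 2 ≤ r) (hℓ : 1 ≤ ℓ) (hn : 1 ≤ n)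
    (F : Type*) [Field F] [Fintype F] (hq : Fintype.card F = q)
    (H : Fin n → Submodule F (Fin (r * ℓ) → F))
    (hdim : ∀ j, finrank F (H j) = ℓ)
    (hspan : ∀ J : Finset (Fin n), J.card = r → (⨆ j ∈ J, H j) = ⊤)
    (i : Fin n) (W : Submodule F (Fin (r * ℓ) → F))
    (hW : finrank F W = (r - 1) * ℓ) :
    ∑ j ∈ Finset.univ.erase i, (q ^ finrank F ↥(W ⊓ H j) - 1) / (q - 1)
      ≤ (r - 1) * ((q ^ ℓ - 1) / (q - 1)) := by
  classical
  set V : Type _ := (Fin (r * ℓ) → F) with hVdef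
  have hq2 : 2 ≤ q := hq ▸ Fintype.one_lt_card
  have hq1 : 0 < q - 1 := by omega
  set X : Type _ := Module.Dual F V with hXdef
  letI : Finite X := Finite.of_injective _ (DFunLike.coe_injective (F := V →ₗ[F] F))
  letI : Fintype X := Fintype.ofFinite X
  have hV : finrank F V = r * ℓ := by
    show finrank F (Fin (r * ℓ) → F) = r * ℓ
    simp
  have hrl : (r - 1) * ℓ + ℓ = r * ℓ := by
    obtain ⟨r', rfl⟩ : ∃ r', r = r' + 1 := ⟨r - 1, by omega⟩
    simp [add_mul]
  -- cardinality of the nonzero part of a dual annihilator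
  have hcard : ∀ (U : Submodule F V) (d : ℕ), finrank F U = d →
      (Finset.univ.filter fun φ : X => φ ∈ U.dualAnnihilator ∧ φ ≠ 0).card = q ^ (r * ℓ - d) - 1 := by
    intro U d hd
    have h1 : (Finset.univ.filter fun φ : X => φ ∈ U.dualAnnihilator ∧ φ ≠ 0)
        = (Finset.univ.filter fun φ : X => φ ∈ U.dualAnnihilator).erase 0 := by
      ext φ; simp [and_comm]
    have h0 : (0 : X) ∈ (Finset.univ.filter fun φ : X => φ ∈ U.dualAnnihilator) := by
      simp [Submodule.zero_mem]
    rw [h1, Finset.card_erase_of_mem h0]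
    have h2 : Fintype.card {φ : X // φ ∈ U.dualAnnihilator}
        = (Finset.univ.filter fun φ : X => φ ∈ U.dualAnnihilator).card :=
      Fintype.card_of_subtype _ (by simp)
    have h3 : Fintype.card {φ : X // φ ∈ U.dualAnnihilator}
        = q ^ finrank F U.dualAnnihilator := by
      rw [card_eq_pow_finrank (K := F), hq]
    have h4 : finrank F U.dualAnnihilator = r * ℓ - d := by
      have e1 : finrank F (V ⧸ U) = finrank F U.dualAnnihilator :=
        (Subspace.quotEquivAnnihilator U).finrank_eq
      have e2 : finrank F (V ⧸ U) + finrank F U = finrank F V :=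
        Submodule.finrank_quotient_add_finrank U
      rw [hV, hd] at e2
      have hdle : d ≤ r * ℓ := by omega
      omega
    rw [← h2, h3, h4]
  -- the sets of functionals
  have hBcard : ∀ j : Fin n,
      (Finset.univ.filter fun φ : X => (φ ∈ W.dualAnnihilator ∧ φ ∈ (H j).dualAnnihilator) ∧ φ ≠ 0).card
        = q ^ finrank F ↥(W ⊓ H j) - 1 := by
    intro j
    have hsup : finrank F ↥(W ⊔ H j) + finrank F ↥(W ⊓ H j) = (r - 1) * ℓ + ℓ := by
      rw [Submodule.finrank_sup_add_finrank_inf_eq, hW, hdim j]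
    have hfin : finrank F ↥(W ⊓ H j) ≤ ℓ := by
      have := Submodule.finrank_mono (inf_le_right : W ⊓ H j ≤ H j)
      rw [hdim j] at this; exact this
    have heq : (Finset.univ.filter fun φ : X => (φ ∈ W.dualAnnihilator ∧ φ ∈ (H j).dualAnnihilator) ∧ φ ≠ 0)
        = (Finset.univ.filter fun φ : X => φ ∈ (W ⊔ H j).dualAnnihilator ∧ φ ≠ 0) := by
      ext φ
      simp [Submodule.dualAnnihilator_sup_eq, Submodule.mem_inf]
    rw [heq, hcard (W ⊔ H j) (finrank F ↥(W ⊔ H j)) rfl]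
    congr 2
    omega
  set A : Finset X := Finset.univ.filter fun φ : X => φ ∈ W.dualAnnihilator ∧ φ ≠ 0 with hA
  have hAcard : A.card = q ^ ℓ - 1 := by
    rw [hA, hcard W ((r - 1) * ℓ) hW]
    congr 2
    omega
  -- each nonzero functional annihilates at most r - 1 of the H j
  have key : ∀ φ ∈ A, ((Finset.univ.erase i).filter fun j => φ ∈ (H j).dualAnnihilator).card ≤ r - 1 := by
    intro φ hφ
    rw [hA, Finset.mem_filter] at hφ
    by_contra hcon
    push_neg at hcon
    have hrle : r ≤ ((Finset.univ.erase i).filter fun j => φ ∈ (H j).dualAnnihilator).card := by omega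
    obtain ⟨J, hJsub, hJcard⟩ := Finset.exists_subset_card_eq hrle
    have htop : (⊤ : Submodule F V) ≤ LinearMap.ker φ := by
      rw [← hspan J hJcard]
      apply iSup_le
      intro j
      apply iSup_le
      intro hjJ
      have := hJsub hjJ
      rw [Finset.mem_filter] at this
      intro x hx
      exact (Submodule.mem_dualAnnihilator φ).mp this.2 x hx
    have : φ = 0 := LinearMap.ker_eq_top.mp (top_le_iff.mp htop)
    exact hφ.2.2 this
  -- double counting
  have main : ∑ j ∈ Finset.univ.erase i, (q ^ finrank F ↥(W ⊓ H j) - 1)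
      ≤ (q ^ ℓ - 1) * (r - 1) := by
    have step1 : ∑ j ∈ Finset.univ.erase i, (q ^ finrank F ↥(W ⊓ H j) - 1)
        = ∑ j ∈ Finset.univ.erase i,
            (A.filter fun φ => φ ∈ (H j).dualAnnihilator).card := by
      apply Finset.sum_congr rfl
      intro j _
      rw [← hBcard j]
      congr 1
      ext φ
      rw [hA]
      simp only [Finset.mem_filter, Finset.mem_univ, true_and]
      tauto
    have swap : ∑ j ∈ Finset.univ.erase i,
          (A.filter fun φ => φ ∈ (H j).dualAnnihilator).card
        = ∑ φ ∈ A, ((Finset.univ.erase i).filter fun j => φ ∈ (H j).dualAnnihilator).card := by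
      simp only [Finset.card_filter]
      exact Finset.sum_comm
    rw [step1, swap]
    calc ∑ φ ∈ A, ((Finset.univ.erase i).filter fun j => φ ∈ (H j).dualAnnihilator).card
        ≤ ∑ φ ∈ A, (r - 1) := Finset.sum_le_sum key
      _ = (q ^ ℓ - 1) * (r - 1) := by rw [Finset.sum_const, hAcard, smul_eq_mul]
  -- conclude via exact division
  have hdvd : ∀ j : Fin n, (q - 1) ∣ (q ^ finrank F ↥(W ⊓ H j) - 1) := fun j => by
    simpa using Nat.sub_dvd_pow_sub_pow q 1 (finrank F ↥(W ⊓ H j))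
  have hdvdl : (q - 1) ∣ (q ^ ℓ - 1) := by simpa using Nat.sub_dvd_pow_sub_pow q 1 ℓ
  have hsumdiv : ∑ j ∈ Finset.univ.erase i, (q ^ finrank F ↥(W ⊓ H j) - 1) / (q - 1)
      = (∑ j ∈ Finset.univ.erase i, (q ^ finrank F ↥(W ⊓ H j) - 1)) / (q - 1) := by
    rw [eq_comm, Nat.div_eq_iff_eq_mul_left hq1 (Finset.dvd_sum fun j _ => hdvd j),
      Finset.sum_mul]
    apply Finset.sum_congr rfl
    intro j _
    exact (Nat.div_mul_cancel (hdvd j)).symm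
  rw [hsumdiv]
  calc (∑ j ∈ Finset.univ.erase i, (q ^ finrank F ↥(W ⊓ H j) - 1)) / (q - 1)
      ≤ ((q ^ ℓ - 1) * (r - 1)) / (q - 1) := Nat.div_le_div_right main
    _ = (r - 1) * ((q ^ ℓ - 1) / (q - 1)) := by
        rw [mul_comm, Nat.mul_div_assoc _ hdvdl]
end

section
/- Let q be a prime power, r ≥ 2, ℓ ≥ 1, n ≥ 1 integers, and let H_1, …, H_n be ℓ-dimensional 𝔽_q-subspaces of V = 𝔽_q^{rℓ} satisfying the r-wise spanning condition. Fix i ∈ {1,…,n} and let W ≤ V be any 𝔽_q-subspace with dim W = (r-1)ℓ. Then ∑_{j≠i} dim(W ∩ H_j) ≤ (r−1)·(q^ℓ − 1)/(q − 1). -/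
open Module Finset

open scoped Classical

lemma geom_aux (q : ℕ) (hq : 2 ≤ q) (ℓ : ℕ) :
    (q - 1) * ∑ i ∈ Finset.range ℓ, q ^ i = q ^ ℓ - 1 := by
  induction ℓ with
  | zero => simp
  | succ m ih =>
      rw [Finset.sum_range_succ, Nat.mul_add, ih, pow_succ]
      have h1 : 1 ≤ q ^ m := Nat.one_le_pow _ _ (by omega)
      have h2 : (q - 1) * q ^ m = q * q ^ m - 1 * q ^ m := by rw [← Nat.sub_mul]
      have h3 : q ^ m ≤ q * q ^ m := Nat.le_mul_of_pos_left _ (by omega)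
      have h4 : q ^ m * q = q * q ^ m := mul_comm _ _
      rw [h2, h4, one_mul]
      omega

lemma lin_aux (q : ℕ) (hq : 2 ≤ q) (d : ℕ) : (q - 1) * d ≤ q ^ d - 1 := by
  rw [← geom_aux q hq d]
  apply Nat.mul_le_mul_left
  calc d = ∑ _i ∈ Finset.range d, 1 := by simp
    _ ≤ ∑ i ∈ Finset.range d, q ^ i :=
        Finset.sum_le_sum fun i _ => Nat.one_le_pow _ _ (by omega)

lemma count_lemma {F : Type*} [Field F] [Fintype F]
    {X : Type*} [AddCommGroup X] [Module F X] [Fintype X]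
    {ι : Type*} (s : Finset ι) (C : ι → Submodule F X) (k : ℕ)
    (hmult : ∀ x : X, x ≠ 0 → (s.filter (fun j => x ∈ C j)).card ≤ k) :
    ∑ j ∈ s, (Fintype.card (C j) - 1) ≤ k * (Fintype.card X - 1) := by
  have hcard : ∀ j, Fintype.card (C j) - 1
      = (Finset.univ.filter (fun x : X => x ∈ C j ∧ x ≠ 0)).card := by
    intro j
    have h1 : Fintype.card (C j) = (Finset.univ.filter (fun x : X => x ∈ C j)).card := by
      rw [← Fintype.card_subtype]
    have h2 : (Finset.univ.filter (fun x : X => x ∈ C j ∧ x ≠ 0))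
        = (Finset.univ.filter (fun x : X => x ∈ C j)).erase 0 := by
      ext x; simp [and_comm]
    rw [h2, Finset.card_erase_of_mem (by simp [(C j).zero_mem]), h1]
  calc ∑ j ∈ s, (Fintype.card (C j) - 1)
      = ∑ j ∈ s, (Finset.univ.filter (fun x : X => x ∈ C j ∧ x ≠ 0)).card :=
        Finset.sum_congr rfl fun j _ => hcard j
    _ = ∑ j ∈ s, ∑ x : X, (if x ∈ C j ∧ x ≠ 0 then 1 else 0) :=
        Finset.sum_congr rfl fun j _ => Finset.card_filter _ _
    _ = ∑ x : X, ∑ j ∈ s, (if x ∈ C j ∧ x ≠ 0 then 1 else 0) := Finset.sum_comm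
    _ ≤ ∑ x : X, (if x ≠ 0 then k else 0) := by
        apply Finset.sum_le_sum
        intro x _
        by_cases hx : x = 0
        · simp [hx]
        · rw [if_pos hx]
          calc ∑ j ∈ s, (if x ∈ C j ∧ x ≠ 0 then 1 else 0)
              = ∑ j ∈ s, (if x ∈ C j then 1 else 0) :=
                Finset.sum_congr rfl fun j _ => by simp [hx]
            _ = (s.filter (fun j => x ∈ C j)).card := (Finset.card_filter _ _).symm
            _ ≤ k := hmult x hx
    _ = (Finset.univ.filter (fun x : X => x ≠ 0)).card * k := by
        rw [Finset.sum_ite, Finset.sum_const, Finset.sum_const]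
        simp [mul_comm]
    _ = k * (Fintype.card X - 1) := by
        rw [Finset.filter_ne', Finset.card_erase_of_mem (Finset.mem_univ 0),
          Finset.card_univ, mul_comm]


lemma count_sub {F : Type*} [Field F] [Fintype F] {V : Type*} [AddCommGroup V]
    [Module F V] [Finite V] (D : Submodule F V) {ι : Type*}
    (s : Finset ι) (C : ι → Submodule F V) (hCD : ∀ j, C j ≤ D) (k : ℕ)
    (hmult : ∀ x : V, x ≠ 0 → (s.filter (fun j => x ∈ C j)).card ≤ k) :
    ∑ j ∈ s, (Fintype.card F ^ finrank F (C j) - 1)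
      ≤ k * (Fintype.card F ^ finrank F D - 1) := by
  letI : Fintype V := Fintype.ofFinite _
  letI : Fintype ↥D := Fintype.ofFinite _
  set C' : ι → Submodule F ↥D := fun j => (C j).comap D.subtype with hC'def
  have hC'rank : ∀ j, finrank F (C' j) = finrank F (C j) := fun j =>
    LinearEquiv.finrank_eq (Submodule.comapSubtypeEquivOfLe (hCD j))
  have hmult' : ∀ x : ↥D, x ≠ 0 → (s.filter (fun j => x ∈ C' j)).card ≤ k := by
    intro x hx
    have hxne : (x : V) ≠ 0 := fun h => hx (Subtype.ext h)
    have heq : s.filter (fun j => x ∈ C' j) = s.filter (fun j => (x : V) ∈ C j) := by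
      apply Finset.filter_congr
      intro j _
      simp [hC'def, Submodule.mem_comap]
    rw [heq]
    exact hmult _ hxne
  have hcount := count_lemma (X := ↥D) s C' k hmult'
  have hcardD : Fintype.card ↥D = Fintype.card F ^ finrank F D :=
    card_eq_pow_finrank (K := F) (V := ↥D)
  have hcardC : ∀ j, Fintype.card (C' j) = Fintype.card F ^ finrank F (C j) := by
    intro j
    rw [card_eq_pow_finrank (K := F) (V := ↥(C' j)), hC'rank j]
  rw [hcardD] at hcount
  calc ∑ j ∈ s, (Fintype.card F ^ finrank F (C j) - 1)
      = ∑ j ∈ s, (Fintype.card (C' j) - 1) :=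
        Finset.sum_congr rfl fun j _ => by rw [hcardC j]
    _ ≤ k * (Fintype.card F ^ finrank F D - 1) := hcount

set_option maxHeartbeats 1000000 in
/-- Proposition: dual counting, dimension form.
With `H 1, …, H n` ℓ-dimensional `F`-subspaces of `V = F^{rℓ}` satisfying the
`r`-wise spanning condition, a fixed node `i`, and a subspace `W` of dimension
`(r-1)ℓ`, we have `∑_{j ≠ i} dim (W ⊓ H j) ≤ (r - 1)·(q^ℓ - 1)/(q - 1)`. -/
theorem incidence_multiplicity_dim_count
    (q r ℓ n : ℕ) (hr : 2 ≤ r) (hℓ : 1 ≤ ℓ) (hn : 1 ≤ n)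
    (F : Type*) [Field F] [Fintype F] (hq : Fintype.card F = q)
    (H : Fin n → Submodule F (Fin (r * ℓ) → F))
    (hdim : ∀ j, finrank F (H j) = ℓ)
    (hspan : ∀ J : Finset (Fin n), J.card = r → (⨆ j ∈ J, H j) = ⊤)
    (i : Fin n) (W : Submodule F (Fin (r * ℓ) → F))
    (hW : finrank F W = (r - 1) * ℓ) :
    ∑ j ∈ Finset.univ.erase i, finrank F ↥(W ⊓ H j)
      ≤ (r - 1) * ((q ^ ℓ - 1) / (q - 1)) := by
  subst hq
  have hq2 : 2 ≤ Fintype.card F := Fintype.one_lt_card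
  have hV : finrank F (Fin (r * ℓ) → F) = r * ℓ := Module.finrank_fin_fun F
  have hrl : (r - 1) * ℓ + ℓ = r * ℓ := by
    have h : r - 1 + 1 = r := by omega
    calc (r - 1) * ℓ + ℓ = ((r - 1) + 1) * ℓ := by ring
      _ = r * ℓ := by rw [h]
  set D : Submodule F (Dual F (Fin (r * ℓ) → F)) := W.dualAnnihilator with hDdef
  have hD : finrank F D = ℓ := by
    have h1 : finrank F ((Fin (r * ℓ) → F) ⧸ W) = finrank F ↥D :=
      (Subspace.quotEquivAnnihilator W).finrank_eq
    have h2 := Submodule.finrank_quotient_add_finrank W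
    rw [hV, hW] at h2
    omega
  set C : Fin n → Submodule F (Dual F (Fin (r * ℓ) → F)) :=
    fun j => (W ⊔ H j).dualAnnihilator with hCdef
  have hCD : ∀ j, C j ≤ D := fun j => Submodule.dualAnnihilator_anti le_sup_left
  have hCrank : ∀ j, finrank F (C j) = finrank F ↥(W ⊓ H j) := by
    intro j
    have h1 : finrank F ((Fin (r * ℓ) → F) ⧸ (W ⊔ H j)) = finrank F ↥(C j) :=
      (Subspace.quotEquivAnnihilator (W ⊔ H j)).finrank_eq
    have h2 := Submodule.finrank_quotient_add_finrank (W ⊔ H j)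
    have h3 := Submodule.finrank_sup_add_finrank_inf_eq W (H j)
    rw [hW, hdim j] at h3
    rw [hV] at h2
    omega
  have hmult : ∀ φ : Dual F (Fin (r * ℓ) → F), φ ≠ 0 →
      ((Finset.univ.erase i).filter (fun j => φ ∈ C j)).card ≤ r - 1 := by
    intro φ hφ
    by_contra hcon
    push_neg at hcon
    have hcard : r ≤ ((Finset.univ.erase i).filter (fun j => φ ∈ C j)).card := by omega
    obtain ⟨J, hJsub, hJcard⟩ := Finset.exists_subset_card_eq hcard
    have hker : (⊤ : Submodule F (Fin (r * ℓ) → F)) ≤ LinearMap.ker φ := by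
      rw [← hspan J hJcard]
      refine iSup_le fun j => iSup_le fun hj => ?_
      intro v hv
      have hmem : φ ∈ C j := (Finset.mem_filter.mp (hJsub hj)).2
      have hmem2 : φ ∈ (H j).dualAnnihilator :=
        Submodule.dualAnnihilator_anti le_sup_right hmem
      exact LinearMap.mem_ker.mpr ((Submodule.mem_dualAnnihilator φ).mp hmem2 v hv)
    exact hφ (LinearMap.ext fun v => hker Submodule.mem_top)
  haveI : Finite (Dual F (Fin (r * ℓ) → F)) := Module.finite_of_finite F
  have hcount := count_sub D (Finset.univ.erase i) C hCD (r - 1) hmult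
  rw [hD] at hcount
  -- arithmetic conclusion
  set q := Fintype.card F with hqdef
  set S : ℕ := ∑ j ∈ Finset.univ.erase i, finrank F ↥(W ⊓ H j) with hSdef
  have hsum1 : (q - 1) * S ≤ ∑ j ∈ Finset.univ.erase i, (q ^ finrank F (C j) - 1) := by
    rw [hSdef, Finset.mul_sum]
    refine Finset.sum_le_sum fun j _ => ?_
    rw [hCrank j]
    exact lin_aux q hq2 _
  have hsum2 : (q - 1) * S ≤ (r - 1) * (q ^ ℓ - 1) := le_trans hsum1 hcount
  have hgeom := geom_aux q hq2 ℓ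
  set T : ℕ := ∑ k ∈ Finset.range ℓ, q ^ k with hTdef
  have hdiv : (q ^ ℓ - 1) / (q - 1) = T := by
    rw [← hgeom]
    exact Nat.mul_div_cancel_left T (by omega)
  rw [hdiv]
  have hfin : (q - 1) * S ≤ (q - 1) * ((r - 1) * T) := by
    calc (q - 1) * S ≤ (r - 1) * (q ^ ℓ - 1) := hsum2
      _ = (r - 1) * ((q - 1) * T) := by rw [hgeom]
      _ = (q - 1) * ((r - 1) * T) := by ring
  exact Nat.le_of_mul_le_mul_left hfin (by omega)
end

section
/- Let q be a prime power and let H_1, …, H_n ∈ 𝔽_q^{rℓ×ℓ} (with r ≥ 2, ℓ ≥ 1) be the blocks of a parity-check matrix of an (n, n−r, ℓ) MDS array code over 𝔽_q, i.e., for every subset I ⊆ {1,…,n} with |I| = r the rℓ×rℓ block matrix [H_i]_{i∈I} is invertible. Then for every node i ∈ {1,…,n} and every matrix M ∈ 𝔽_q^{ℓ×rℓ} such that M·H_i is invertible, one has ∑_{j≠i} rank(M·H_j) ≥ ℓ(n−1) − (r−1)·(q^ℓ − 1)/(q − 1). -/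
open Module Finset Matrix

lemma aux_vecMul_eq_zero_of_rank {F : Type*} [Field F] {m : ℕ} {α : Type*} [Fintype α]
    (B : Matrix (Fin m) α F) (hB : B.rank = m) {v : Fin m → F} (hv : v ᵥ* B = 0) : v = 0 := by
  have h1 : Bᵀ.rank = m := by rw [Matrix.rank_transpose]; exact hB
  have h2 := LinearMap.finrank_range_add_finrank_ker (Matrix.mulVecLin Bᵀ)
  rw [Module.finrank_fin_fun] at h2
  rw [Matrix.rank] at h1
  have hker : finrank F (LinearMap.ker (Matrix.mulVecLin Bᵀ)) = 0 := by omega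
  have hbot : LinearMap.ker (Matrix.mulVecLin Bᵀ) = ⊥ := Submodule.finrank_eq_zero.mp hker
  have hvmem : v ∈ LinearMap.ker (Matrix.mulVecLin Bᵀ) := by
    simp only [LinearMap.mem_ker, Matrix.mulVecLin_apply, Matrix.mulVec_transpose]
    exact hv
  rw [hbot] at hvmem
  simpa using hvmem

lemma aux_geom (q : ℕ) (hq : 1 ≤ q) (ℓ : ℕ) :
    (q - 1) * ∑ k ∈ Finset.range ℓ, q ^ k = q ^ ℓ - 1 := by
  induction ℓ with
  | zero => simp
  | succ m ih =>
    rw [Finset.sum_range_succ, Nat.mul_add, ih, pow_succ]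
    have h1 : 1 ≤ q ^ m := Nat.one_le_pow _ _ (by omega)
    obtain ⟨s, rfl⟩ : ∃ s, q = s + 1 := ⟨q - 1, by omega⟩
    simp only [Nat.add_sub_cancel]
    set a := (s + 1) ^ m with ha
    rw [Nat.mul_add, Nat.mul_one, Nat.mul_comm a s]
    generalize s * a = b
    omega

/-- Incidence-multiplicity lower bound on repair bandwidth, matrix form.
Let `H 1, …, H n ∈ F^{rℓ×ℓ}` be the blocks of the parity-check matrix of an
`(n, n-r, ℓ)` MDS array code over the finite field `F` of size `q` (every block
matrix `[H i]_{i ∈ I}`, `|I| = r`, is invertible, i.e. has rank `rℓ`). Then for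
every node `i` and every repair matrix `M` (i.e. `M·H i` invertible),
`∑_{j ≠ i} rank (M·H j) ≥ ℓ(n-1) - (r-1)·(q^ℓ-1)/(q-1)` over the integers. -/
theorem repair_bandwidth_incidence_multiplicity_bound
    (q r ℓ n : ℕ) (hr : 2 ≤ r) (hℓ : 1 ≤ ℓ) (hn : 1 ≤ n)
    (F : Type*) [Field F] [Fintype F] [DecidableEq F] (hq : Fintype.card F = q)
    (H : Fin n → Matrix (Fin (r * ℓ)) (Fin ℓ) F)
    (hMDS : ∀ I : Finset (Fin n), I.card = r →
      (Matrix.of fun a (p : {x // x ∈ I} × Fin ℓ) => H p.1.1 a p.2).rank = r * ℓ)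
    (i : Fin n) (M : Matrix (Fin ℓ) (Fin (r * ℓ)) F) (hM : IsUnit (M * H i)) :
    ((ℓ : ℤ) * ((n : ℤ) - 1) - ((r : ℤ) - 1) * (((q ^ ℓ - 1) / (q - 1) : ℕ) : ℤ))
      ≤ ∑ j ∈ Finset.univ.erase i, ((M * H j).rank : ℤ) := by
  classical
  have hq2 : 2 ≤ q := by
    rw [← hq]; exact Fintype.one_lt_card
  set E : Finset (Fin n) := Finset.univ.erase i with hE
  -- kernel dimensions
  set d : Fin n → ℕ :=
    fun j => finrank F (LinearMap.ker (Matrix.mulVecLin (M * H j)ᵀ)) with hd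
  have hrank_d : ∀ j, (M * H j).rank + d j = ℓ := by
    intro j
    have h2 := LinearMap.finrank_range_add_finrank_ker (Matrix.mulVecLin (M * H j)ᵀ)
    rw [Module.finrank_fin_fun] at h2
    have hrt : (M * H j)ᵀ.rank = (M * H j).rank := Matrix.rank_transpose _
    rw [Matrix.rank] at hrt
    rw [hd]
    rw [← hrt]
    exact h2
  -- x = 0 from vanishing on a unit
  have hMunit : ∀ x : Fin ℓ → F, x ᵥ* (M * H i) = 0 → x = 0 := by
    intro x hx
    have hdet : IsUnit (M * H i).det := (Matrix.isUnit_iff_isUnit_det _).mp hM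
    have := congrArg (fun w => w ᵥ* (M * H i)⁻¹) hx
    simpa [Matrix.vecMul_vecMul, Matrix.mul_nonsing_inv _ hdet] using this
  -- multiplicity bound
  have mult : ∀ x : Fin ℓ → F, x ≠ 0 →
      (E.filter (fun j => x ᵥ* (M * H j) = 0)).card ≤ r - 1 := by
    intro x hx
    by_contra hc
    push_neg at hc
    have hr' : r ≤ (E.filter (fun j => x ᵥ* (M * H j) = 0)).card := by omega
    obtain ⟨I, hIsub, hIcard⟩ := Finset.exists_subset_card_eq hr'
    have hrankI := hMDS I hIcard
    set v := x ᵥ* M with hv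
    have hvB : v ᵥ* (Matrix.of fun a (p : {x // x ∈ I} × Fin ℓ) => H p.1.1 a p.2) = 0 := by
      funext p
      obtain ⟨⟨j, hj⟩, c⟩ := p
      have hj' : x ᵥ* (M * H j) = 0 := (Finset.mem_filter.mp (hIsub hj)).2
      have hvc : (v ᵥ* H j) c = 0 := by
        rw [hv, Matrix.vecMul_vecMul, hj']; rfl
      exact hvc
    have hv0 : v = 0 := aux_vecMul_eq_zero_of_rank _ hrankI hvB
    have : x ᵥ* (M * H i) = 0 := by
      rw [← Matrix.vecMul_vecMul, ← hv, hv0, Matrix.zero_vecMul]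
    exact hx (hMunit x this)
  -- the nonzero kernel vectors
  set A : Fin n → Finset (Fin ℓ → F) :=
    fun j => Finset.univ.filter (fun x => x ≠ 0 ∧ x ᵥ* (M * H j) = 0) with hA
  have hAcard : ∀ j, (A j).card = q ^ d j - 1 := by
    intro j
    have hfilt : Finset.univ.filter (fun x : Fin ℓ → F => x ᵥ* (M * H j) = 0)
        = Finset.univ.filter (fun x => x ∈ LinearMap.ker (Matrix.mulVecLin (M * H j)ᵀ)) := by
      apply Finset.filter_congr
      intro x _
      simp [LinearMap.mem_ker, Matrix.mulVecLin_apply, Matrix.mulVec_transpose]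
    have hcard0 : (Finset.univ.filter (fun x : Fin ℓ → F => x ᵥ* (M * H j) = 0)).card
        = q ^ d j := by
      rw [hfilt, ← Fintype.card_subtype]
      rw [← hq, hd]
      exact card_eq_pow_finrank
    have hAj : A j = (Finset.univ.filter
        (fun x : Fin ℓ → F => x ᵥ* (M * H j) = 0)).erase 0 := by
      rw [hA]
      ext x
      simp [Finset.mem_erase, and_comm]
    rw [hAj, Finset.card_erase_of_mem, hcard0]
    simp [Matrix.zero_vecMul]
  -- double counting
  set X : Finset (Fin ℓ → F) := Finset.univ.filter (fun x => x ≠ 0) with hX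
  have hXcard : X.card = q ^ ℓ - 1 := by
    rw [hX, Finset.filter_ne', Finset.card_erase_of_mem (Finset.mem_univ _),
      Finset.card_univ, Fintype.card_fun, hq, Fintype.card_fin]
  have hswap : ∑ j ∈ E, (A j).card ≤ (q ^ ℓ - 1) * (r - 1) := by
    have h1 : ∀ j, (A j).card = ∑ x ∈ X, (if x ᵥ* (M * H j) = 0 then 1 else 0) := by
      intro j
      have hAX : A j = X.filter (fun x => x ᵥ* (M * H j) = 0) := by
        rw [hA, hX, Finset.filter_filter]
      rw [hAX, Finset.card_filter]
    calc ∑ j ∈ E, (A j).card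
        = ∑ j ∈ E, ∑ x ∈ X, (if x ᵥ* (M * H j) = 0 then 1 else 0) := by
          exact Finset.sum_congr rfl (fun j _ => h1 j)
      _ = ∑ x ∈ X, ∑ j ∈ E, (if x ᵥ* (M * H j) = 0 then 1 else 0) := Finset.sum_comm
      _ = ∑ x ∈ X, (E.filter (fun j => x ᵥ* (M * H j) = 0)).card := by
          exact Finset.sum_congr rfl (fun x _ => (Finset.card_filter _ _).symm)
      _ ≤ ∑ x ∈ X, (r - 1) := by
          apply Finset.sum_le_sum
          intro x hxX
          exact mult x (by simpa [hX] using hxX)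
      _ = X.card * (r - 1) := by rw [Finset.sum_const, smul_eq_mul]
      _ = (q ^ ℓ - 1) * (r - 1) := by rw [hXcard]
  -- from cardinalities to dimensions
  set G : ℕ := ∑ k ∈ Finset.range ℓ, q ^ k with hG
  have hGgeom : (q - 1) * G = q ^ ℓ - 1 := aux_geom q (by omega) ℓ
  have hdim_le : ∀ j, (q - 1) * d j ≤ (A j).card := by
    intro j
    rw [hAcard j, ← aux_geom q (by omega) (d j)]
    apply Nat.mul_le_mul_left
    calc d j = ∑ _k ∈ Finset.range (d j), 1 := by simp
      _ ≤ ∑ k ∈ Finset.range (d j), q ^ k :=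
          Finset.sum_le_sum (fun k _ => Nat.one_le_pow _ _ (by omega))
  have hsum_d : ∑ j ∈ E, d j ≤ (r - 1) * G := by
    have h1 : (q - 1) * ∑ j ∈ E, d j ≤ (q - 1) * ((r - 1) * G) := by
      rw [Finset.mul_sum]
      calc ∑ j ∈ E, (q - 1) * d j ≤ ∑ j ∈ E, (A j).card :=
            Finset.sum_le_sum (fun j _ => hdim_le j)
        _ ≤ (q ^ ℓ - 1) * (r - 1) := hswap
        _ = (q - 1) * ((r - 1) * G) := by rw [← hGgeom]; ring
    exact Nat.le_of_mul_le_mul_left h1 (by omega)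
  -- total
  have hEcard : E.card = n - 1 := by
    rw [hE, Finset.card_erase_of_mem (Finset.mem_univ _), Finset.card_univ, Fintype.card_fin]
  have htotal : (n - 1) * ℓ ≤ (∑ j ∈ E, (M * H j).rank) + (r - 1) * G := by
    have h1 : ∑ j ∈ E, ((M * H j).rank + d j) = (n - 1) * ℓ := by
      rw [Finset.sum_congr rfl (fun j _ => hrank_d j), Finset.sum_const, smul_eq_mul, hEcard]
    rw [Finset.sum_add_distrib] at h1
    omega
  -- division identity
  have hdiv : (q ^ ℓ - 1) / (q - 1) = G := by
    rw [← hGgeom, Nat.mul_div_cancel_left _ (by omega : 0 < q - 1)]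
  -- conclude over ℤ
  rw [hdiv]
  have hcast : ((n - 1 : ℕ) * ℓ : ℤ) ≤ ((∑ j ∈ E, (M * H j).rank : ℕ) : ℤ) + ((r - 1 : ℕ) * G : ℤ) := by
    exact_mod_cast htotal
  push_cast [Nat.cast_sub (by omega : 1 ≤ n), Nat.cast_sub (by omega : 1 ≤ r)] at hcast
  rw [hE] at hcast
  push_cast
  linarith
end

section
/- Let q be a prime power and let H_1, …, H_n ∈ 𝔽_q^{rℓ×ℓ} (with r ≥ 2, ℓ ≥ 1) be the blocks of a parity-check matrix of an (n, n−r, ℓ) MDS array code over 𝔽_q, i.e., for every subset I ⊆ {1,…,n} with |I| = r the rℓ×rℓ block matrix [H_i]_{i∈I} is invertible. Then for every node i ∈ {1,…,n} and every matrix M ∈ 𝔽_q^{ℓ×rℓ} such that M·H_i is invertible, one has ∑_{j≠i} nz(M·H_j) ≥ ℓ(n−1) − (r−1)·(q^ℓ − 1)/(q − 1), where nz(A) denotes the number of nonzero columns of the matrix A. -/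
/-!
Let `K_j` be the left kernel of the `ℓ × ℓ` matrix `M·H_j` and `d_j` its dimension, so that
`nz(M·H_j) ≥ rank(M·H_j) = ℓ - d_j`. A nonzero `y` lies in fewer than `r` of the `K_j`: if
`y ∈ K_j` for all `j` in a set `I` of size `r`, then `yM` annihilates the full-row-rank block
matrix `[H_j]_{j∈I}`, so `yM = 0`, hence `y·(M·H_i) = 0` and `y = 0`. Counting the pairs `(y, j)`
with `0 ≠ y ∈ K_j` gives `∑_j (q^{d_j} - 1) ≤ (r - 1)(q^ℓ - 1)`, and Bernoulli's inequality
`q^d - 1 ≥ d(q - 1)` turns this into `∑_j d_j ≤ (r - 1)(q^ℓ - 1)/(q - 1)`.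
-/

open Module Finset

namespace Matrix

variable {m n K : Type*} [Fintype m] [Fintype n]

def nonzeroCols [Zero K] [DecidableEq K] (A : Matrix m n K) : Finset n :=
  univ.filter fun t => ∃ s, A s t ≠ 0

variable [Field K]

theorem rank_le_card_nonzeroCols [DecidableEq K] (A : Matrix m n K) :
    A.rank ≤ #A.nonzeroCols := by
  classical
  set D : Matrix n n K := diagonal fun t => if t ∈ A.nonzeroCols then 1 else 0
  have hAD : A * D = A := by
    ext s t
    by_cases ht : t ∈ A.nonzeroCols
    · simp [D, ht]
    · simp only [nonzeroCols, mem_filter, mem_univ, true_and, not_exists, not_not] at ht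
      simp [D, ht]
  calc A.rank = (A * D).rank := by rw [hAD]
    _ ≤ D.rank := rank_mul_le_right _ _
    _ = #A.nonzeroCols := by rw [rank_diagonal, Fintype.card_subtype]; simp

theorem rank_add_finrank_ker_vecMulLinear (A : Matrix m n K) :
    A.rank + finrank K (LinearMap.ker A.vecMulLinear) = Fintype.card m := by
  rw [← rank_transpose, rank, ← vecMulLinear_transpose, transpose_transpose,
    LinearMap.finrank_range_add_finrank_ker, finrank_fintype_fun_eq_card]

theorem vecMul_injective_of_rank_eq_card (A : Matrix m n K) (hA : A.rank = Fintype.card m) :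
    Function.Injective A.vecMul := by
  rw [vecMul_injective_iff, linearIndependent_iff_card_eq_finrank_span, ← hA,
    rank_eq_finrank_span_row]
  rfl

end Matrix

section Counting

variable {K V : Type*} [DivisionRing K] [Fintype K] [AddCommGroup V] [Module K V] [Fintype V]

variable (K V) in
theorem card_sub_one_mul_finrank_add_one_le :
    (Fintype.card K - 1 : ℤ) * finrank K V + 1 ≤ Fintype.card V := by
  have hK : (-2 : ℤ) ≤ Fintype.card K - 1 := by linarith [Int.natCast_nonneg (Fintype.card K)]
  have hBernoulli := one_add_mul_le_pow hK (finrank K V)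
  rw [add_sub_cancel] at hBernoulli
  rw [card_eq_pow_finrank (K := K) (V := V)]
  push_cast
  linarith

theorem Submodule.card_filter_mem_erase_zero_add_one [DecidableEq V] (W : Submodule K V)
    [DecidablePred (· ∈ W)] :
    #{v ∈ univ.erase 0 | v ∈ W} + 1 = Fintype.card W := by
  rw [filter_erase, card_erase_add_one (by simp), Fintype.card_subtype]

theorem sub_one_mul_sum_finrank_le {ι : Type*} (W : ι → Submodule K V) (s : Finset ι) (r : ℕ)
    (hW : ∀ t ⊆ s, #t = r → ∀ v, (∀ j ∈ t, v ∈ W j) → v = 0) :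
    (Fintype.card K - 1 : ℤ) * ∑ j ∈ s, finrank K (W j) ≤ (r - 1) * (Fintype.card V - 1) := by
  classical
  have hnonzero (j : ι) :
      (Fintype.card K - 1 : ℤ) * finrank K (W j) ≤ #{v ∈ univ.erase 0 | v ∈ W j} := by
    have hcard := card_sub_one_mul_finrank_add_one_le K (W j)
    rw [← (W j).card_filter_mem_erase_zero_add_one] at hcard
    push_cast at hcard
    linarith
  have hmult : ∀ v ∈ univ.erase (0 : V), (#{j ∈ s | v ∈ W j} : ℤ) ≤ r - 1 := by
    intro v hv
    by_contra! h
    obtain ⟨t, hts, ht⟩ := exists_subset_card_eq (show r ≤ #{j ∈ s | v ∈ W j} by omega)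
    exact ne_of_mem_erase hv <| hW t (hts.trans (filter_subset _ _)) ht v fun j hj =>
      (mem_filter.1 (hts hj)).2
  calc (Fintype.card K - 1 : ℤ) * ∑ j ∈ s, finrank K (W j)
      = ∑ j ∈ s, (Fintype.card K - 1 : ℤ) * finrank K (W j) := by push_cast [mul_sum]; rfl
    _ ≤ ∑ j ∈ s, (#{v ∈ univ.erase 0 | v ∈ W j} : ℤ) := sum_le_sum fun j _ => hnonzero j
    _ = ∑ v ∈ univ.erase 0, (#{j ∈ s | v ∈ W j} : ℤ) := by
      simp only [card_filter, Nat.cast_sum]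
      exact sum_comm
    _ ≤ ∑ v ∈ univ.erase (0 : V), ((r : ℤ) - 1) := sum_le_sum hmult
    _ = (r - 1) * (Fintype.card V - 1) := by
      rw [sum_const, card_erase_of_mem (mem_univ _), card_univ, nsmul_eq_mul,
        Nat.cast_pred Fintype.card_pos, mul_comm]

end Counting

section BlockMatrix

open Matrix

variable {ι m k F : Type*} [Fintype m] [Fintype k] [Field F]

theorem eq_zero_of_forall_vecMul_eq_zero_of_rank_eq_card (H : ι → Matrix m k F) (I : Finset ι)
    (hI : (Matrix.of fun a (p : I × k) => H p.1 a p.2).rank = Fintype.card m)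
    (w : m → F) (hw : ∀ j ∈ I, w ᵥ* H j = 0) : w = 0 := by
  refine vecMul_injective_of_rank_eq_card _ hI ?_
  ext ⟨⟨j, hj⟩, t⟩
  simpa [vecMul, dotProduct] using congrFun (hw j hj) t

theorem eq_zero_of_forall_vecMul_mul_eq_zero [DecidableEq k] (H : ι → Matrix m k F) (r : ℕ)
    (hMDS : ∀ I : Finset ι, #I = r →
      (Matrix.of fun a (p : I × k) => H p.1 a p.2).rank = Fintype.card m)
    {i : ι} {M : Matrix k m F} (hM : IsUnit (M * H i)) (I : Finset ι) (hI : #I = r)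
    (y : k → F) (hy : ∀ j ∈ I, y ᵥ* (M * H j) = 0) : y = 0 := by
  have hyM : y ᵥ* M = 0 :=
    eq_zero_of_forall_vecMul_eq_zero_of_rank_eq_card H I (hMDS I hI) _ fun j hj => by
      rw [vecMul_vecMul, hy j hj]
  apply vecMul_injective_iff_isUnit.2 hM
  change y ᵥ* (M * H i) = 0 ᵥ* (M * H i)
  rw [← vecMul_vecMul, hyM, zero_vecMul, zero_vecMul]

end BlockMatrix

theorem repair_io_incidence_multiplicity_bound_general
    (q r ℓ n : ℕ)
    (F : Type*) [Field F] [Fintype F] [DecidableEq F] (hq : Fintype.card F = q)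
    (H : Fin n → Matrix (Fin (r * ℓ)) (Fin ℓ) F)
    (hMDS : ∀ I : Finset (Fin n), I.card = r →
      (Matrix.of fun a (p : {x // x ∈ I} × Fin ℓ) => H p.1.1 a p.2).rank = r * ℓ)
    (i : Fin n) (M : Matrix (Fin ℓ) (Fin (r * ℓ)) F) (hM : IsUnit (M * H i)) :
    ((ℓ : ℤ) * ((n : ℤ) - 1) - ((r : ℤ) - 1) * (((q ^ ℓ - 1) / (q - 1) : ℕ) : ℤ))
      ≤ ∑ j ∈ Finset.univ.erase i,
          (((Finset.univ.filter fun t : Fin ℓ => ∃ s, (M * H j) s t ≠ 0).card : ℤ)) := by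
  subst hq
  set K : Fin n → Submodule F (Fin ℓ → F) := fun j => LinearMap.ker (M * H j).vecMulLinear
  set N : ℕ := (Fintype.card F ^ ℓ - 1) / (Fintype.card F - 1) with hN_def
  have hnz (j : Fin n) : (ℓ : ℤ) - finrank F (K j) ≤ #(M * H j).nonzeroCols := by
    have hrank : (M * H j).rank + finrank F (K j) = ℓ :=
      (M * H j).rank_add_finrank_ker_vecMulLinear.trans (Fintype.card_fin ℓ)
    have hcols := (M * H j).rank_le_card_nonzeroCols
    omega
  have hdim : (Fintype.card F - 1 : ℤ) * ∑ j ∈ univ.erase i, (finrank F (K j) : ℤ)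
      ≤ (r - 1) * (Fintype.card F ^ ℓ - 1) := by
    simpa using sub_one_mul_sum_finrank_le K (univ.erase i) r fun t _ ht y hy =>
      eq_zero_of_forall_vecMul_mul_eq_zero H r (fun I hI => by simpa using hMDS I hI) hM t ht y hy
  have hN : (Fintype.card F - 1 : ℤ) * N = Fintype.card F ^ ℓ - 1 := by
    rw [hN_def, ← Nat.geomSum_eq Fintype.one_lt_card]
    push_cast
    exact mul_geom_sum _ _
  have hsum : ∑ j ∈ univ.erase i, (finrank F (K j) : ℤ) ≤ (r - 1) * N := by
    have hq_pos : (0 : ℤ) < Fintype.card F - 1 := by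
      have : 1 < Fintype.card F := Fintype.one_lt_card
      omega
    refine le_of_mul_le_mul_left ?_ hq_pos
    linear_combination hdim - (r - 1 : ℤ) * hN
  calc (ℓ : ℤ) * (n - 1) - (r - 1) * N
      ≤ ∑ j ∈ univ.erase i, ((ℓ : ℤ) - finrank F (K j)) := by
        rw [sum_sub_distrib, sum_const, card_erase_of_mem (mem_univ _), card_univ,
          Fintype.card_fin, nsmul_eq_mul, Nat.cast_pred i.pos]
        linarith
    _ ≤ ∑ j ∈ univ.erase i, (#(M * H j).nonzeroCols : ℤ) := sum_le_sum fun j _ => hnz j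
    -- the statement decides `∃ s` by `Nat.decidableExistsFin`, not by the instance in `nonzeroCols`
    _ = _ := sum_congr rfl fun j _ => by unfold Matrix.nonzeroCols; congr!

/-- Incidence-multiplicity lower bound on repair I/O, matrix form.
With the same MDS array-code setup as for repair bandwidth, for every node `i` and
every repair matrix `M` (i.e. `M·H i` invertible),
`∑_{j ≠ i} nz (M·H j) ≥ ℓ(n-1) - (r-1)·(q^ℓ-1)/(q-1)` over the integers, where
`nz A` is the number of nonzero columns of `A`. -/
theorem repair_io_incidence_multiplicity_bound
    (q r ℓ n : ℕ) (hr : 2 ≤ r) (hℓ : 1 ≤ ℓ) (hn : 1 ≤ n)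
    (F : Type*) [Field F] [Fintype F] [DecidableEq F] (hq : Fintype.card F = q)
    (H : Fin n → Matrix (Fin (r * ℓ)) (Fin ℓ) F)
    (hMDS : ∀ I : Finset (Fin n), I.card = r →
      (Matrix.of fun a (p : {x // x ∈ I} × Fin ℓ) => H p.1.1 a p.2).rank = r * ℓ)
    (i : Fin n) (M : Matrix (Fin ℓ) (Fin (r * ℓ)) F) (hM : IsUnit (M * H i)) :
    ((ℓ : ℤ) * ((n : ℤ) - 1) - ((r : ℤ) - 1) * (((q ^ ℓ - 1) / (q - 1) : ℕ) : ℤ))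
      ≤ ∑ j ∈ Finset.univ.erase i,
          (((Finset.univ.filter fun t : Fin ℓ => ∃ s, (M * H j) s t ≠ 0).card : ℤ)) :=
  repair_io_incidence_multiplicity_bound_general q r ℓ n F hq H hMDS i M hM
end

section
/- Let q be a prime power, r ≥ 2, ℓ ≥ 1, n ≥ 1 integers, and let H_1, …, H_n be ℓ-dimensional 𝔽_q-subspaces of V = 𝔽_q^{rℓ} satisfying the r-wise spanning condition. Fix i ∈ {1,…,n} and let W ≤ V be an 𝔽_q-subspace with dim W = (r-1)ℓ, and set t_j := dim(W ∩ H_j) for j ≠ i. If ∑_{j≠i} t_j = (r−1)·(q^ℓ − 1)/(q − 1), then t_j ∈ {0, 1} for every j ≠ i. -/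
open Module Finset

lemma geom_step (q t : ℕ) (hq : 1 ≤ q) : q ^ t + (q - 1) ≤ q ^ (t + 1) := by
  have h1 : 1 ≤ q ^ t := Nat.one_le_pow _ _ hq
  have h2 : (q - 1) * 1 ≤ (q - 1) * q ^ t := Nat.mul_le_mul_left _ h1
  have h3 : q ^ (t + 1) = q ^ t + (q - 1) * q ^ t := by
    rw [pow_succ]
    have : q ^ t * q = q ^ t * (1 + (q - 1)) := by congr 1; omega
    rw [this, Nat.mul_add, Nat.mul_one, Nat.mul_comm]
  omega

lemma geom_lb1 (q : ℕ) (hq : 1 ≤ q) : ∀ t, (q - 1) * t + 1 ≤ q ^ t := by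
  intro t
  induction t with
  | zero => simp
  | succ t ih =>
      have h := geom_step q t hq
      have : (q - 1) * (t + 1) + 1 = ((q - 1) * t + 1) + (q - 1) := by ring
      omega

lemma geom_lb2 (q : ℕ) (hq : 2 ≤ q) : ∀ t, 2 ≤ t → (q - 1) * t + 2 ≤ q ^ t := by
  intro t
  induction t with
  | zero => omega
  | succ t ih =>
      intro ht
      rcases Nat.lt_or_ge t 2 with h2 | h2
      · -- t = 1, so t+1 = 2
        have : t = 1 := by omega
        subst this
        have hp : q ^ (1 + 1) = q * q := by ring
        have h3 : q * 2 ≤ q * q := Nat.mul_le_mul_left _ hq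
        omega
      · have h := geom_step q t (by omega)
        have := ih h2
        have : (q - 1) * (t + 1) + 2 = ((q - 1) * t + 2) + (q - 1) := by ring
        omega


/-- Equality case: intersection dimensions are 0 or 1.
If `∑_{j ≠ i} dim (W ⊓ H j) = (r-1)·(q^ℓ-1)/(q-1)`, then
`dim (W ⊓ H j) ∈ {0, 1}` for every `j ≠ i`. -/
theorem incidence_multiplicity_equality_dims_le_one
    (q r ℓ n : ℕ) (hr : 2 ≤ r) (hℓ : 1 ≤ ℓ) (hn : 1 ≤ n)
    (F : Type*) [Field F] [Fintype F] (hq : Fintype.card F = q)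
    (H : Fin n → Submodule F (Fin (r * ℓ) → F))
    (hdim : ∀ j, finrank F (H j) = ℓ)
    (hspan : ∀ J : Finset (Fin n), J.card = r → (⨆ j ∈ J, H j) = ⊤)
    (i : Fin n) (W : Submodule F (Fin (r * ℓ) → F))
    (hW : finrank F W = (r - 1) * ℓ)
    (heq : ∑ j ∈ Finset.univ.erase i, finrank F ↥(W ⊓ H j)
      = (r - 1) * ((q ^ ℓ - 1) / (q - 1))) :
    ∀ j, j ≠ i → finrank F ↥(W ⊓ H j) = 0 ∨ finrank F ↥(W ⊓ H j) = 1 := by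
  classical
  haveI : Finite (Module.Dual F (Fin (r * ℓ) → F)) :=
    Finite.of_injective _ (DFunLike.coe_injective (F := Module.Dual F (Fin (r * ℓ) → F)))
  haveI : Fintype (Module.Dual F (Fin (r * ℓ) → F)) := Fintype.ofFinite _
  have hq2 : 2 ≤ q := hq ▸ Fintype.one_lt_card
  set t : Fin n → ℕ := fun j => finrank F ↥(W ⊓ H j) with ht
  -- annihilator dimensions
  have hann : ∀ S : Submodule F (Fin (r * ℓ) → F),
      finrank F S.dualAnnihilator = r * ℓ - finrank F S := by
    intro S
    have h1 : finrank F ((Fin (r * ℓ) → F) ⧸ S) = finrank F S.dualAnnihilator :=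
      LinearEquiv.finrank_eq (Subspace.quotEquivAnnihilator S)
    have h2 := Submodule.finrank_quotient_add_finrank S
    rw [Module.finrank_fin_fun] at h2
    omega
  -- cardinalities of submodules of the dual
  have hcard : ∀ S : Submodule F (Module.Dual F (Fin (r * ℓ) → F)),
      (univ.filter (fun φ => φ ∈ S)).card = q ^ finrank F S := by
    intro S
    rw [← Fintype.card_subtype, card_eq_pow_finrank (K := F), hq]
  have hcard0 : ∀ S : Submodule F (Module.Dual F (Fin (r * ℓ) → F)),
      (univ.filter (fun φ => φ ∈ S ∧ φ ≠ 0)).card = q ^ finrank F S - 1 := by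
    intro S
    have he : univ.filter (fun φ => φ ∈ S ∧ φ ≠ 0)
        = (univ.filter (fun φ => φ ∈ S)).erase 0 := by
      ext φ
      simp [Finset.mem_erase, and_comm]
    rw [he, Finset.card_erase_of_mem (by simp [S.zero_mem]), hcard]
  -- the key finset
  set T : Finset (Module.Dual F (Fin (r * ℓ) → F)) :=
    univ.filter (fun φ => φ ∈ W.dualAnnihilator ∧ φ ≠ 0) with hT
  have hrl : (r - 1) * ℓ + ℓ = r * ℓ := by
    have := Nat.le_mul_of_pos_left ℓ (show 0 < r by omega)
    rw [Nat.sub_one_mul]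
    omega
  have hTcard : T.card = q ^ ℓ - 1 := by
    rw [hT, hcard0, hann, hW]
    congr 2
    omega
  -- per-j sets
  have hBj : ∀ j, (T.filter (fun φ => φ ∈ (H j).dualAnnihilator)).card = q ^ t j - 1 := by
    intro j
    have hsum := Submodule.finrank_sup_add_finrank_inf_eq W (H j)
    rw [hW, hdim j] at hsum
    simp only [ht]
    have hfe : T.filter (fun φ => φ ∈ (H j).dualAnnihilator)
        = univ.filter (fun φ => φ ∈ (W ⊔ H j).dualAnnihilator ∧ φ ≠ 0) := by
      ext φ
      simp only [hT, Finset.mem_filter, Finset.mem_univ, true_and,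
        Submodule.dualAnnihilator_sup_eq, Submodule.mem_inf]
      tauto
    rw [hfe, hcard0, hann]
    congr 2
    omega
  -- each nonzero functional vanishes on at most r-1 of the H j
  have hmul : ∀ φ ∈ T, ((univ.erase i).filter
      (fun j => φ ∈ (H j).dualAnnihilator)).card ≤ r - 1 := by
    intro φ hφ
    by_contra hc
    push_neg at hc
    have hr' : r ≤ ((univ.erase i).filter (fun j => φ ∈ (H j).dualAnnihilator)).card := by
      omega
    obtain ⟨J, hJsub, hJcard⟩ := Finset.exists_subset_card_eq hr'
    have htop := hspan J hJcard
    have hker : (⨆ j ∈ J, H j) ≤ LinearMap.ker φ := by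
      refine iSup₂_le fun j hj => ?_
      intro x hx
      have hmem := hJsub hj
      rw [Finset.mem_filter] at hmem
      exact LinearMap.mem_ker.mpr ((Submodule.mem_dualAnnihilator φ).mp hmem.2 x hx)
    rw [htop] at hker
    have hφ0 : φ = 0 := LinearMap.ext fun x => by
      simpa using hker (Submodule.mem_top (x := x))
    rw [hT, Finset.mem_filter] at hφ
    exact hφ.2.2 hφ0
  -- double counting
  have hdc : ∑ j ∈ univ.erase i, (q ^ t j - 1) ≤ (r - 1) * (q ^ ℓ - 1) := by
    have h1 : ∑ j ∈ univ.erase i, (T.filter (fun φ => φ ∈ (H j).dualAnnihilator)).card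
        = ∑ φ ∈ T, ((univ.erase i).filter (fun j => φ ∈ (H j).dualAnnihilator)).card := by
      simp only [Finset.card_filter]
      rw [Finset.sum_comm]
    calc ∑ j ∈ univ.erase i, (q ^ t j - 1)
        = ∑ φ ∈ T, ((univ.erase i).filter (fun j => φ ∈ (H j).dualAnnihilator)).card := by
          rw [← h1]; exact Finset.sum_congr rfl fun j _ => (hBj j).symm
      _ ≤ ∑ _φ ∈ T, (r - 1) := Finset.sum_le_sum hmul
      _ = (q ^ ℓ - 1) * (r - 1) := by rw [Finset.sum_const, hTcard, smul_eq_mul]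
      _ = (r - 1) * (q ^ ℓ - 1) := Nat.mul_comm _ _
  -- arithmetic endgame
  have hdvd : (q - 1) ∣ (q ^ ℓ - 1) := by
    simpa using Nat.sub_dvd_pow_sub_pow q 1 ℓ
  have hsum2 : ∑ j ∈ univ.erase i, (q - 1) * t j = (r - 1) * (q ^ ℓ - 1) := by
    rw [← Finset.mul_sum, heq]
    rw [← Nat.mul_assoc, Nat.mul_comm (q - 1) (r - 1), Nat.mul_assoc,
      Nat.mul_div_cancel' hdvd]
  have hptle : ∀ j ∈ univ.erase i, (q - 1) * t j ≤ q ^ t j - 1 := by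
    intro j _
    have := geom_lb1 q (by omega) (t j)
    omega
  have hsums : ∑ j ∈ univ.erase i, (q - 1) * t j = ∑ j ∈ univ.erase i, (q ^ t j - 1) := by
    have hle := Finset.sum_le_sum hptle
    omega
  have hpt : ∀ j ∈ univ.erase i, (q - 1) * t j = q ^ t j - 1 :=
    fun j hj => ((Finset.sum_eq_sum_iff_of_le hptle).mp hsums) j hj
  intro j hji
  have hj : j ∈ univ.erase i := Finset.mem_erase.mpr ⟨hji, Finset.mem_univ j⟩
  by_contra hcon
  push_neg at hcon
  have ht2 : 2 ≤ t j := by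
    rcases hcon with ⟨h0, h1⟩
    simp only [ht]
    omega
  have h2 := geom_lb2 q hq2 (t j) ht2
  have h3 := hpt j hj
  have h4 : 1 ≤ q ^ t j := Nat.one_le_pow _ _ (by omega)
  omega
end

section
/- Let q be a prime power, r ≥ 2, ℓ ≥ 1, n ≥ 1 integers, and let H_1, …, H_n be ℓ-dimensional 𝔽_q-subspaces of V = 𝔽_q^{rℓ} satisfying the r-wise spanning condition. Fix i ∈ {1,…,n} and let W ≤ V be an 𝔽_q-subspace with dim W = (r-1)ℓ. If ∑_{j≠i} dim(W ∩ H_j) = (r−1)·(q^ℓ − 1)/(q − 1), then the number of indices j ≠ i with dim(W ∩ H_j) = 1 equals (r−1)·(q^ℓ − 1)/(q − 1), and consequently n ≥ 1 + (r−1)·(q^ℓ − 1)/(q − 1). -/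
/-!
The nonzero functionals on `V` vanishing on `W` number `q^ℓ - 1`; those vanishing on `W + H_j`
number `q^(dim (W ∩ H_j)) - 1`, and by the `r`-wise spanning condition a nonzero functional
vanishes on fewer than `r` of the `H_j`. Double counting incidences gives
`∑_{j ≠ i} (q^(d_j) - 1) ≤ (r - 1)(q^ℓ - 1) = (q - 1) ∑_{j ≠ i} d_j`, while Bernoulli's inequality
`(q - 1) d ≤ q^d - 1` is strict for `d ≥ 2`. So every `d_j ≤ 1`, and the indices with `d_j = 1`
are counted by `∑ d_j`.
-/

open Module Finset

theorem sub_one_mul_add_one_lt_pow {q d : ℕ} (hq : 2 ≤ q) (hd : 2 ≤ d) :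
    (q - 1) * d + 1 < q ^ d := by
  induction d, hd using Nat.le_induction with
  | base =>
    obtain ⟨p, rfl⟩ : ∃ p, q = p + 2 := ⟨q - 2, by omega⟩
    rw [show p + 2 - 1 = p + 1 by omega]
    nlinarith
  | succ d hd ih =>
    have : q - 1 ≤ (q - 1) * q ^ d := Nat.le_mul_of_pos_right _ (by positivity)
    calc (q - 1) * (d + 1) + 1 = (q - 1) * d + 1 + (q - 1) := by ring
      _ < q ^ d + (q - 1) * q ^ d := by omega
      _ = (q - 1 + 1) * q ^ d := by ring
      _ = q ^ (d + 1) := by rw [Nat.sub_add_cancel (by omega), pow_succ, mul_comm]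

theorem sub_one_mul_le_pow_sub_one (q d : ℕ) : (q - 1) * d ≤ q ^ d - 1 := by
  rcases lt_or_ge q 2 with hq | hq
  · simp [Nat.sub_eq_zero_of_le (Nat.le_of_lt_succ hq)]
  rcases lt_or_ge d 2 with hd | hd
  · interval_cases d <;> simp
  · have := sub_one_mul_add_one_lt_pow hq hd
    omega

section NonzeroAnnihilators

variable {K V : Type*} [Field K] [Fintype K] [AddCommGroup V] [Module K V]
  [FiniteDimensional K V]

instance : Finite (Dual K V) := Module.finite_of_finite K

open Classical in
noncomputable def nonzeroAnnihilators (U : Submodule K V) : Finset (Dual K V) :=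
  (Set.toFinite (U.dualAnnihilator : Set (Dual K V))).toFinset.erase 0

theorem mem_nonzeroAnnihilators {U : Submodule K V} {ψ : Dual K V} :
    ψ ∈ nonzeroAnnihilators U ↔ ψ ∈ U.dualAnnihilator ∧ ψ ≠ 0 := by
  simp [nonzeroAnnihilators, and_comm]

theorem card_nonzeroAnnihilators (U : Submodule K V) :
    #(nonzeroAnnihilators U) = Fintype.card K ^ (finrank K V - finrank K U) - 1 := by
  classical
  have hrank := Subspace.finrank_add_finrank_dualAnnihilator_eq U
  rw [nonzeroAnnihilators, card_erase_of_mem (by simp),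
    ← Set.ncard_eq_toFinset_card _ (Set.toFinite _), ← Nat.card_coe_set_eq, SetLike.coe_sort_coe,
    natCard_eq_pow_finrank (K := K), Nat.card_eq_fintype_card]
  congr 2
  omega

theorem nonzeroAnnihilators_anti {U U' : Submodule K V} (h : U ≤ U') :
    nonzeroAnnihilators U' ⊆ nonzeroAnnihilators U := fun ψ hψ => by
  rw [mem_nonzeroAnnihilators] at hψ ⊢
  exact ⟨Submodule.dualAnnihilator_anti h hψ.1, hψ.2⟩

end NonzeroAnnihilators

theorem card_lt_of_forall_le_ker {R M ι : Type*} [CommSemiring R] [AddCommMonoid M] [Module R M]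
    {H : ι → Submodule R M} {J : Finset ι} {r : ℕ}
    (hspan : ∀ C ⊆ J, #C = r → ⨆ j ∈ C, H j = ⊤) {ψ : Dual R M} (hψ : ψ ≠ 0)
    {C : Finset ι} (hCJ : C ⊆ J) (hC : ∀ j ∈ C, H j ≤ LinearMap.ker ψ) : #C < r := by
  by_contra! hrC
  obtain ⟨C', hC'C, hC'⟩ := exists_subset_card_eq hrC
  have : ⊤ ≤ LinearMap.ker ψ := by
    rw [← hspan C' (hC'C.trans hCJ) hC']
    exact iSup₂_le fun j hj => hC j (hC'C hj)
  exact hψ (LinearMap.ker_eq_top.mp (top_le_iff.mp this))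

section DoubleCounting

variable {K V ι : Type*} [Field K] [Fintype K] [AddCommGroup V] [Module K V]
  [FiniteDimensional K V]

theorem sum_card_nonzeroAnnihilators_sup_le (W : Submodule K V) (H : ι → Submodule K V)
    {J : Finset ι} {r : ℕ} (hspan : ∀ C ⊆ J, #C = r → ⨆ j ∈ C, H j = ⊤) :
    ∑ j ∈ J, #(nonzeroAnnihilators (W ⊔ H j)) ≤ (r - 1) * #(nonzeroAnnihilators W) := by
  classical
  let incident (j : ι) (ψ : Dual K V) : Prop := ψ ∈ nonzeroAnnihilators (W ⊔ H j)
  calc ∑ j ∈ J, #(nonzeroAnnihilators (W ⊔ H j))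
      = ∑ j ∈ J, #((nonzeroAnnihilators W).bipartiteAbove incident j) := by
        refine sum_congr rfl fun j _ => ?_
        rw [bipartiteAbove, filter_mem_eq_inter,
          inter_eq_right.mpr (nonzeroAnnihilators_anti le_sup_left)]
    _ = ∑ ψ ∈ nonzeroAnnihilators W, #(J.bipartiteBelow incident ψ) :=
        sum_card_bipartiteAbove_eq_sum_card_bipartiteBelow incident
    _ ≤ ∑ _ψ ∈ nonzeroAnnihilators W, (r - 1) := by
        refine sum_le_sum fun ψ hψ => Nat.le_sub_one_of_lt ?_
        refine card_lt_of_forall_le_ker hspan (mem_nonzeroAnnihilators.mp hψ).2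
          (filter_subset _ _) fun j hj x hx => ?_
        have hψj := (mem_nonzeroAnnihilators.mp (mem_filter.mp hj).2).1
        exact (Submodule.mem_dualAnnihilator ψ).mp hψj x (Submodule.mem_sup_right hx)
    _ = (r - 1) * #(nonzeroAnnihilators W) := by rw [sum_const, smul_eq_mul, mul_comm]

theorem sum_pow_finrank_inf_sub_one_le (W : Submodule K V) (H : ι → Submodule K V)
    {J : Finset ι} {r : ℕ} (hspan : ∀ C ⊆ J, #C = r → ⨆ j ∈ C, H j = ⊤)
    (hdim : ∀ j ∈ J, finrank K W + finrank K (H j) = finrank K V) :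
    ∑ j ∈ J, (Fintype.card K ^ finrank K ↥(W ⊓ H j) - 1)
      ≤ (r - 1) * (Fintype.card K ^ (finrank K V - finrank K W) - 1) := by
  rw [← card_nonzeroAnnihilators]
  refine le_of_eq_of_le (sum_congr rfl fun j hj => ?_)
    (sum_card_nonzeroAnnihilators_sup_le W H hspan)
  rw [card_nonzeroAnnihilators]
  have hsup_inf := Submodule.finrank_sup_add_finrank_inf_eq W (H j)
  have hsup_le := Submodule.finrank_le (W ⊔ H j)
  have hWHj := hdim j hj
  congr 2
  omega

end DoubleCounting

theorem le_one_of_sum_pow_sub_one_le {ι : Type*} {s : Finset ι} {d : ι → ℕ} {q : ℕ}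
    (hq : 2 ≤ q) (h : ∑ i ∈ s, (q ^ d i - 1) ≤ (q - 1) * ∑ i ∈ s, d i) :
    ∀ i ∈ s, d i ≤ 1 := by
  have hterm (i : ι) (_ : i ∈ s) := sub_one_mul_le_pow_sub_one q (d i)
  rw [mul_sum] at h
  have hsum := (sum_eq_sum_iff_of_le hterm).mp (le_antisymm (sum_le_sum hterm) h)
  intro i hi
  by_contra! hd
  have := sub_one_mul_add_one_lt_pow hq hd
  have := hsum i hi
  omega

theorem card_filter_eq_one_eq_sum {ι : Type*} {s : Finset ι} {d : ι → ℕ}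
    (h : ∀ i ∈ s, d i ≤ 1) : #{i ∈ s | d i = 1} = ∑ i ∈ s, d i := by
  rw [card_filter]
  refine sum_congr rfl fun i hi => ?_
  have := h i hi
  split_ifs <;> omega

theorem incidence_multiplicity_equality_count_and_length_general
    (q r ℓ n : ℕ) (hr : 2 ≤ r)
    (F : Type*) [Field F] [Fintype F] (hq : Fintype.card F = q)
    (H : Fin n → Submodule F (Fin (r * ℓ) → F))
    (hdim : ∀ j, finrank F (H j) = ℓ)
    (hspan : ∀ J : Finset (Fin n), J.card = r → (⨆ j ∈ J, H j) = ⊤)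
    (i : Fin n) (W : Submodule F (Fin (r * ℓ) → F))
    (hW : finrank F W = (r - 1) * ℓ)
    (heq : ∑ j ∈ Finset.univ.erase i, finrank F ↥(W ⊓ H j)
      = (r - 1) * ((q ^ ℓ - 1) / (q - 1))) :
    ((Finset.univ.erase i).filter
        fun j => finrank F ↥(W ⊓ H j) = 1).card
      = (r - 1) * ((q ^ ℓ - 1) / (q - 1)) ∧
    1 + (r - 1) * ((q ^ ℓ - 1) / (q - 1)) ≤ n := by
  have hq2 : 2 ≤ q := hq ▸ Fintype.one_lt_card
  have hrℓ : (r - 1) * ℓ + ℓ = r * ℓ := by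
    rw [← Nat.succ_mul, Nat.succ_eq_add_one, Nat.sub_add_cancel (by omega)]
  have hbound := sum_pow_finrank_inf_sub_one_le W H (J := univ.erase i)
    (fun C _ hC => hspan C hC) fun j _ => by rw [hW, hdim j, finrank_fin_fun, hrℓ]
  rw [finrank_fin_fun, hW, hq, show r * ℓ - (r - 1) * ℓ = ℓ by omega,
    ← Nat.mul_div_cancel' (Nat.sub_one_dvd_pow_sub_one q ℓ), Nat.mul_left_comm, ← heq] at hbound
  have hcount := (card_filter_eq_one_eq_sum (le_one_of_sum_pow_sub_one_le hq2 hbound)).trans heq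
  refine ⟨hcount, ?_⟩
  have hle := card_filter_le (univ.erase i) fun j => finrank F ↥(W ⊓ H j) = 1
  have hcard := card_erase_add_one (mem_univ i)
  rw [card_univ, Fintype.card_fin] at hcard
  omega

/-- Equality case: incidence count and necessary length bound.
If `∑_{j ≠ i} dim (W ⊓ H j) = (r-1)·(q^ℓ-1)/(q-1)`, then the number of indices
`j ≠ i` with `dim (W ⊓ H j) = 1` equals `(r-1)·(q^ℓ-1)/(q-1)`, and consequently
`n ≥ 1 + (r-1)·(q^ℓ-1)/(q-1)`. -/
theorem incidence_multiplicity_equality_count_and_length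
    (q r ℓ n : ℕ) (hr : 2 ≤ r) (hℓ : 1 ≤ ℓ) (hn : 1 ≤ n)
    (F : Type*) [Field F] [Fintype F] (hq : Fintype.card F = q)
    (H : Fin n → Submodule F (Fin (r * ℓ) → F))
    (hdim : ∀ j, finrank F (H j) = ℓ)
    (hspan : ∀ J : Finset (Fin n), J.card = r → (⨆ j ∈ J, H j) = ⊤)
    (i : Fin n) (W : Submodule F (Fin (r * ℓ) → F))
    (hW : finrank F W = (r - 1) * ℓ)
    (heq : ∑ j ∈ Finset.univ.erase i, finrank F ↥(W ⊓ H j)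
      = (r - 1) * ((q ^ ℓ - 1) / (q - 1))) :
    ((Finset.univ.erase i).filter
        fun j => finrank F ↥(W ⊓ H j) = 1).card
      = (r - 1) * ((q ^ ℓ - 1) / (q - 1)) ∧
    1 + (r - 1) * ((q ^ ℓ - 1) / (q - 1)) ≤ n :=
  incidence_multiplicity_equality_count_and_length_general q r ℓ n hr F hq H hdim hspan i W hW heq
end

section
/- Let q be a prime power and let r ≥ 2, ℓ ≥ 2, n ≥ 1 be integers with n ≤ q^ℓ + r − 1. Let H_1, …, H_n be ℓ-dimensional 𝔽_q-subspaces of V = 𝔽_q^{rℓ} satisfying the r-wise spanning condition. If there exist i ∈ {1,…,n} and an 𝔽_q-subspace W ≤ V with dim W = (r-1)ℓ such that ∑_{j≠i} dim(W ∩ H_j) = (r−1)·(q^ℓ − 1)/(q − 1), then r ≤ q. -/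
/-!
The nonzero functionals vanishing on `W` number `q^ℓ - 1`, and by the `r`-wise spanning
condition each of them vanishes on at most `r - 1` of the `H j`. Those vanishing on `W + H j`
number `q^{a j} - 1` with `a j = dim (W ⊓ H j)`, so double counting gives
`∑ (q^{a j} - 1) ≤ (r - 1)(q^ℓ - 1) = (q - 1) ∑ a j`. As `q^a - 1 ≥ (q - 1) a` with equality
only for `a ≤ 1`, every `a j ≤ 1`, hence `(r - 1)(q^ℓ - 1)/(q - 1) ≤ n - 1 ≤ q^ℓ + r - 2`,
which forces `r ≤ q`.
-/

open Module Finset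

namespace Nat

theorem sub_one_mul_add_one_le_pow {q : ℕ} (hq : 1 ≤ q) (a : ℕ) : (q - 1) * a + 1 ≤ q ^ a := by
  obtain ⟨p, rfl⟩ := Nat.exists_eq_add_of_le' hq
  simpa [mul_comm, add_comm] using one_add_le_pow_of_two_add_nonneg (Nat.zero_le (2 + p)) a

theorem sub_one_mul_add_one_lt_pow {q a : ℕ} (hq : 2 ≤ q) (ha : 2 ≤ a) :
    (q - 1) * a + 1 < q ^ a := by
  obtain ⟨p, rfl⟩ := Nat.exists_eq_add_of_le' hq
  obtain ⟨b, rfl⟩ := Nat.exists_eq_add_of_le' ha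
  have hb := sub_one_mul_add_one_le_pow (q := p + 2) (by omega) (b + 1)
  simp only [show p + 2 - 1 = p + 1 by omega] at hb ⊢
  rw [pow_succ]
  nlinarith [Nat.mul_le_mul_right (p + 2) hb, Nat.zero_le (p * p * b), Nat.zero_le (p * b),
    Nat.zero_le (p * p)]

theorem le_one_of_sum_pow_sub_one_le {ι : Type*} {s : Finset ι} {a : ι → ℕ} {q : ℕ}
    (hq : 2 ≤ q) (h : ∑ j ∈ s, (q ^ a j - 1) ≤ (q - 1) * ∑ j ∈ s, a j) :
    ∀ j ∈ s, a j ≤ 1 := by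
  by_contra! ⟨j, hj, ha⟩
  have hlt : ∑ k ∈ s, (q - 1) * a k < ∑ k ∈ s, (q ^ a k - 1) :=
    Finset.sum_lt_sum
      (fun k _ => by have := sub_one_mul_add_one_le_pow (q := q) (by omega) (a k); omega)
      ⟨j, hj, by have := sub_one_mul_add_one_lt_pow hq ha; omega⟩
  rw [← Finset.mul_sum] at hlt
  omega

theorem le_of_sub_one_mul_geomSum_le {q r ℓ : ℕ} (hq : 2 ≤ q) (hℓ : 2 ≤ ℓ)
    (h : (r - 1) * ((q ^ ℓ - 1) / (q - 1)) ≤ (q ^ ℓ - 1) + (r - 1)) : r ≤ q := by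
  set s := (q ^ ℓ - 1) / (q - 1)
  have hs : (q - 1) * s = q ^ ℓ - 1 := Nat.mul_div_cancel' (Nat.sub_one_dvd_pow_sub_one q ℓ)
  have hs_ge : q + 1 ≤ s := by
    calc q + 1 = ∑ k ∈ range 2, q ^ k := by simp [Finset.sum_range_succ, add_comm]
      _ ≤ ∑ k ∈ range ℓ, q ^ k := Finset.sum_le_sum_of_subset (Finset.range_subset_range.2 hℓ)
      _ = s := Nat.geomSum_eq hq ℓ
  by_contra! hqr
  have hsplit : (r - 1) * s = (q - 1) * s + (r - q) * s := by rw [← add_mul]; congr 1; omega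
  have hgrowth : (r - q) * q + (r - q) ≤ (r - q) * s := by
    rw [← mul_add_one]; exact Nat.mul_le_mul_left _ hs_ge
  have : q ≤ (r - q) * q := Nat.le_mul_of_pos_left q (by omega)
  omega

end Nat

section SpanningFamily

variable {K V ι : Type*} [Field K] [AddCommGroup V] [Module K V]
  {H : ι → Submodule K V} {r : ℕ}

theorem card_filter_mem_dualAnnihilator_lt
    (hspan : ∀ J : Finset ι, #J = r → ⨆ j ∈ J, H j = ⊤) {φ : Dual K V} (hφ : φ ≠ 0)
    (s : Finset ι) [DecidablePred fun j => φ ∈ (H j).dualAnnihilator] :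
    #{j ∈ s | φ ∈ (H j).dualAnnihilator} < r := by
  by_contra! hr
  obtain ⟨J, hJs, hJ⟩ := Finset.exists_subset_card_eq hr
  have hker : ⨆ j ∈ J, H j ≤ LinearMap.ker φ := iSup₂_le fun j hj x hx =>
    (Submodule.mem_dualAnnihilator φ).1 (Finset.mem_filter.1 (hJs hj)).2 x hx
  rw [hspan J hJ, top_le_iff, LinearMap.ker_eq_top] at hker
  exact hφ hker

theorem sum_pow_codim_sup_sub_one_le [Finite K] [FiniteDimensional K V]
    (hspan : ∀ J : Finset ι, #J = r → ⨆ j ∈ J, H j = ⊤) (W : Submodule K V) (s : Finset ι) :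
    ∑ j ∈ s, (Nat.card K ^ (finrank K V - finrank K ↥(W ⊔ H j)) - 1) ≤
      (r - 1) * (Nat.card K ^ (finrank K V - finrank K W) - 1) := by
  classical
  have : Finite (Dual K V) := Module.finite_of_finite K
  have : Fintype (Dual K V) := Fintype.ofFinite _
  let nonzero (U : Submodule K V) : Finset (Dual K V) :=
    ({φ | φ ∈ U.dualAnnihilator} : Finset (Dual K V)).erase 0
  have card_nonzero (U : Submodule K V) :
      #(nonzero U) = Nat.card K ^ (finrank K V - finrank K U) - 1 := by
    rw [Finset.card_erase_of_mem (by simp), ← Fintype.card_subtype, Fintype.card_eq_nat_card,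
      Module.natCard_eq_pow_finrank (K := K), ← Subspace.finrank_add_finrank_dualAnnihilator_eq U,
      Nat.add_sub_cancel_left]
  have nonzero_sup (j : ι) :
      nonzero (W ⊔ H j) = {φ ∈ nonzero W | φ ∈ (H j).dualAnnihilator} := by
    ext φ
    simp only [nonzero, Finset.mem_erase, Finset.mem_filter, Finset.mem_univ, true_and,
      Submodule.dualAnnihilator_sup_eq, Submodule.mem_inf, and_assoc]
  calc ∑ j ∈ s, (Nat.card K ^ (finrank K V - finrank K ↥(W ⊔ H j)) - 1)
      = ∑ j ∈ s, #{φ ∈ nonzero W | φ ∈ (H j).dualAnnihilator} := by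
        simp only [← card_nonzero, nonzero_sup]
    _ = ∑ φ ∈ nonzero W, #{j ∈ s | φ ∈ (H j).dualAnnihilator} :=
        Finset.sum_card_bipartiteAbove_eq_sum_card_bipartiteBelow _
    _ ≤ ∑ φ ∈ nonzero W, (r - 1) := Finset.sum_le_sum fun φ hφ => Nat.le_sub_one_of_lt <|
        card_filter_mem_dualAnnihilator_lt hspan (Finset.ne_of_mem_erase hφ) s
    _ = (r - 1) * (Nat.card K ^ (finrank K V - finrank K W) - 1) := by
        rw [Finset.sum_const, smul_eq_mul, card_nonzero, mul_comm]

end SpanningFamily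

theorem attaining_incidence_multiplicity_bound_forces_r_le_q_general
    (q r ℓ n : ℕ) (hℓ : 2 ≤ ℓ)
    (hlen : n ≤ q ^ ℓ + r - 1)
    (F : Type*) [Field F] [Fintype F] (hq : Fintype.card F = q)
    (H : Fin n → Submodule F (Fin (r * ℓ) → F))
    (hdim : ∀ j, finrank F (H j) = ℓ)
    (hspan : ∀ J : Finset (Fin n), J.card = r → (⨆ j ∈ J, H j) = ⊤)
    (hattain : ∃ (i : Fin n) (W : Submodule F (Fin (r * ℓ) → F)),
      finrank F W = (r - 1) * ℓ ∧
      ∑ j ∈ Finset.univ.erase i, finrank F ↥(W ⊓ H j)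
        = (r - 1) * ((q ^ ℓ - 1) / (q - 1))) :
    r ≤ q := by
  obtain rfl | hr := Nat.eq_zero_or_pos r
  · exact Nat.zero_le q
  obtain ⟨i, W, hW, hsum⟩ := hattain
  have hq2 : 2 ≤ q := hq ▸ Fintype.one_lt_card
  have hV : finrank F (Fin (r * ℓ) → F) = (r - 1) * ℓ + ℓ := by
    rw [Module.finrank_fin_fun, ← Nat.succ_mul, Nat.succ_eq_add_one, Nat.sub_add_cancel hr]
  have hcodim (j : Fin n) :
      finrank F (Fin (r * ℓ) → F) - finrank F ↥(W ⊔ H j) = finrank F ↥(W ⊓ H j) := by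
    have := Submodule.finrank_sup_add_finrank_inf_eq W (H j)
    rw [hW, hdim j] at this
    omega
  have hcodimW : finrank F (Fin (r * ℓ) → F) - finrank F W = ℓ := by omega
  have hcount := sum_pow_codim_sup_sub_one_le hspan W (univ.erase i)
  simp only [hcodim, hcodimW, Nat.card_eq_fintype_card, hq] at hcount
  have hle_one := Nat.le_one_of_sum_pow_sub_one_le hq2 <| hcount.trans_eq <| by
    rw [hsum, mul_left_comm, Nat.mul_div_cancel' (Nat.sub_one_dvd_pow_sub_one q ℓ)]
  refine Nat.le_of_sub_one_mul_geomSum_le hq2 hℓ ?_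
  calc (r - 1) * ((q ^ ℓ - 1) / (q - 1)) = ∑ j ∈ univ.erase i, finrank F ↥(W ⊓ H j) := hsum.symm
    _ ≤ #(univ.erase i) • 1 := Finset.sum_le_card_nsmul _ _ 1 hle_one
    _ = n - 1 := by simp
    _ ≤ (q ^ ℓ - 1) + (r - 1) := by omega

/-- Corollary: attaining the incidence-multiplicity bound forces `r ≤ q`.
Assume `ℓ ≥ 2` and `n ≤ q^ℓ + r - 1` (the general MDS length bound). If some node `i`
admits a subspace `W` of dimension `(r-1)ℓ` with
`∑_{j ≠ i} dim (W ⊓ H j) = (r-1)·(q^ℓ-1)/(q-1)`, then `r ≤ q`. -/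
theorem attaining_incidence_multiplicity_bound_forces_r_le_q
    (q r ℓ n : ℕ) (hr : 2 ≤ r) (hℓ : 2 ≤ ℓ) (hn : 1 ≤ n)
    (hlen : n ≤ q ^ ℓ + r - 1)
    (F : Type*) [Field F] [Fintype F] (hq : Fintype.card F = q)
    (H : Fin n → Submodule F (Fin (r * ℓ) → F))
    (hdim : ∀ j, finrank F (H j) = ℓ)
    (hspan : ∀ J : Finset (Fin n), J.card = r → (⨆ j ∈ J, H j) = ⊤)
    (hattain : ∃ (i : Fin n) (W : Submodule F (Fin (r * ℓ) → F)),
      finrank F W = (r - 1) * ℓ ∧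
      ∑ j ∈ Finset.univ.erase i, finrank F ↥(W ⊓ H j)
        = (r - 1) * ((q ^ ℓ - 1) / (q - 1))) :
    r ≤ q :=
  attaining_incidence_multiplicity_bound_forces_r_le_q_general q r ℓ n hℓ hlen F hq H hdim hspan
    hattain
end

section
/- Let q be a prime power, r ≥ 2, ℓ ≥ 1, n ≥ 1 integers, and let H_1, …, H_n be ℓ-dimensional 𝔽_q-subspaces of V = 𝔽_q^{rℓ} satisfying the r-wise spanning condition. Fix i ∈ {1,…,n}, let W ≤ V be an 𝔽_q-subspace with dim W = (r-1)ℓ, let Q := V/W with quotient map π, and for j ≠ i let U_j ≤ Q* be the annihilator in Q* of π(H_j). Then for every integer s with 1 ≤ s ≤ ℓ, the sum over j ≠ i of the number of s-dimensional 𝔽_q-subspaces of U_j is at most (r−1) times the number of s-dimensional 𝔽_q-subspaces of Q*. -/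
open Module Finset

/-- Gaussian-binomial hierarchy of incidence bounds.
With `Q = V ⧸ W` and `U j` the annihilator in the dual `Q*` of the image of `H j`
in `Q`, for every `1 ≤ s ≤ ℓ` the total number of `s`-dimensional subspaces
contained in the `U j` (`j ≠ i`) is at most `(r-1)` times the number of
`s`-dimensional subspaces of `Q*`. -/
theorem gaussian_binomial_incidence_hierarchy
    (q r ℓ n : ℕ) (hr : 2 ≤ r) (hℓ : 1 ≤ ℓ) (hn : 1 ≤ n)
    (F : Type*) [Field F] [Fintype F] (hq : Fintype.card F = q)
    (H : Fin n → Submodule F (Fin (r * ℓ) → F))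
    (hdim : ∀ j, finrank F (H j) = ℓ)
    (hspan : ∀ J : Finset (Fin n), J.card = r → (⨆ j ∈ J, H j) = ⊤)
    (i : Fin n) (W : Submodule F (Fin (r * ℓ) → F))
    (hW : finrank F W = (r - 1) * ℓ) :
    ∀ s : ℕ, 1 ≤ s → s ≤ ℓ →
      ∑ j ∈ Finset.univ.erase i,
          Nat.card {L : Submodule F (Module.Dual F ((Fin (r * ℓ) → F) ⧸ W)) //
            L ≤ (Submodule.map W.mkQ (H j)).dualAnnihilator ∧ finrank F ↥L = s}
        ≤ (r - 1) *
          Nat.card {L : Submodule F (Module.Dual F ((Fin (r * ℓ) → F) ⧸ W)) //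
            finrank F ↥L = s} := by
  intro s hs1 hs2
  classical
  set Q := (Fin (r * ℓ) → F) ⧸ W with hQ
  haveI : Finite Q := Quotient.finite _
  haveI : Finite (Module.Dual F Q) :=
    Finite.of_injective (fun f : Module.Dual F Q => (f : Q → F)) DFunLike.coe_injective
  haveI : Finite (Submodule F (Module.Dual F Q)) :=
    Finite.of_injective (fun L : Submodule F (Module.Dual F Q) => (L : Set (Module.Dual F Q)))
      SetLike.coe_injective
  haveI : Fintype (Submodule F (Module.Dual F Q)) := Fintype.ofFinite _
  set A : Fin n → Submodule F (Module.Dual F Q) :=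
    fun j => (Submodule.map W.mkQ (H j)).dualAnnihilator with hA
  -- key counting bound
  have key : ∀ L : Submodule F (Module.Dual F Q), finrank F L = s →
      ((Finset.univ.erase i).filter (fun j => L ≤ A j)).card ≤ r - 1 := by
    intro L hL
    by_contra hcon
    push_neg at hcon
    have hrle : r ≤ ((Finset.univ.erase i).filter (fun j => L ≤ A j)).card := by omega
    obtain ⟨J, hJsub, hJcard⟩ := Finset.exists_subset_card_eq hrle
    -- pick a nonzero φ ∈ L
    have hLne : L ≠ ⊥ := by
      intro h
      rw [h, finrank_bot] at hL
      omega
    obtain ⟨φ, hφL, hφ⟩ := Submodule.exists_mem_ne_zero_of_ne_bot hLne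
    have hker : ∀ j ∈ J, H j ≤ LinearMap.ker (φ.comp W.mkQ) := by
      intro j hj x hx
      have hjf := hJsub hj
      rw [Finset.mem_filter] at hjf
      have hφA : φ ∈ A j := hjf.2 hφL
      rw [hA, Submodule.mem_dualAnnihilator] at hφA
      exact hφA (W.mkQ x) ⟨x, hx, rfl⟩
    have htop : (⊤ : Submodule F (Fin (r * ℓ) → F)) ≤ LinearMap.ker (φ.comp W.mkQ) := by
      rw [← hspan J hJcard]
      exact iSup₂_le hker
    apply hφ
    apply LinearMap.ext
    intro y
    obtain ⟨x, rfl⟩ := W.mkQ_surjective y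
    exact htop Submodule.mem_top
  -- double counting
  have hcount : ∀ j : Fin n,
      Nat.card {L : Submodule F (Module.Dual F Q) // L ≤ A j ∧ finrank F ↥L = s}
        = (Finset.univ.filter (fun L : Submodule F (Module.Dual F Q) =>
            L ≤ A j ∧ finrank F ↥L = s)).card := by
    intro j
    rw [Nat.card_eq_fintype_card, Fintype.card_subtype]
  have hcount2 :
      Nat.card {L : Submodule F (Module.Dual F Q) // finrank F ↥L = s}
        = (Finset.univ.filter (fun L : Submodule F (Module.Dual F Q) =>
            finrank F ↥L = s)).card := by
    rw [Nat.card_eq_fintype_card, Fintype.card_subtype]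
  calc ∑ j ∈ Finset.univ.erase i,
          Nat.card {L : Submodule F (Module.Dual F Q) // L ≤ A j ∧ finrank F ↥L = s}
      = ∑ j ∈ Finset.univ.erase i, ∑ L ∈ (Finset.univ : Finset (Submodule F (Module.Dual F Q))),
          (if L ≤ A j ∧ finrank F ↥L = s then 1 else 0) := by
        refine Finset.sum_congr rfl fun j _ => ?_
        rw [hcount j, Finset.card_filter]
    _ = ∑ L ∈ (Finset.univ : Finset (Submodule F (Module.Dual F Q))),
          ∑ j ∈ Finset.univ.erase i, (if L ≤ A j ∧ finrank F ↥L = s then 1 else 0) :=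
        Finset.sum_comm
    _ ≤ ∑ L ∈ (Finset.univ : Finset (Submodule F (Module.Dual F Q))),
          (if finrank F ↥L = s then r - 1 else 0) := by
        refine Finset.sum_le_sum fun L _ => ?_
        by_cases hL : finrank F ↥L = s
        · simp only [hL, and_true, if_true]
          calc ∑ j ∈ Finset.univ.erase i, (if L ≤ A j then 1 else 0)
              = ((Finset.univ.erase i).filter (fun j => L ≤ A j)).card :=
                (Finset.card_filter _ _).symm
            _ ≤ r - 1 := key L hL
        · simp [hL]
    _ = (r - 1) * Nat.card {L : Submodule F (Module.Dual F Q) // finrank F ↥L = s} := by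
        rw [← Finset.sum_filter, Finset.sum_const, smul_eq_mul, hcount2, Nat.mul_comm]
end

section
/- Let q be a prime power and r ≥ 2, ℓ ≥ 1 integers, and regard V = 𝔽_{q^ℓ}^r as an 𝔽_q-vector space. For c ∈ 𝔽_{q^ℓ} let H_c := { x·(1, c, c², …, c^{r−1}) : x ∈ 𝔽_{q^ℓ} }, and for b ∈ 𝔽_{q^ℓ}^× let W_b := { (y_0, …, y_{r−1}) ∈ V : y_{r−1} = b·y_0^q }. Then for every b, c ∈ 𝔽_{q^ℓ}^×: W_b ∩ H_c ≠ {0} if and only if there exists s ∈ 𝔽_{q^ℓ}^× with N_{𝔽_{q^ℓ}/𝔽_q}(s) = 1 and c^{r−1} = b·s. -/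
/-!
A point `x • (1, c, …, c^{r-1})` with `x ≠ 0` lies in `W_b` exactly when `c^{r-1} = b·x^{q-1}`.
The units of `E` form a cyclic group of order `(q - 1)·e` with `e = (#E - 1)/(q - 1)`, and the
norm is `x ↦ x^e`; in a cyclic group of order `d·e` the `d`-th powers are exactly the kernel
of `x ↦ x^e`, so the `(q - 1)`-th powers are exactly the norm-one elements (Hilbert 90).
-/

theorem IsCyclic.range_powMonoidHom_eq_ker {G : Type*} [CommGroup G] [IsCyclic G] [Finite G]
    {d e : ℕ} (hde : d * e = Nat.card G) :
    (powMonoidHom d : G →* G).range = (powMonoidHom e).ker := by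
  have hd : 0 < d := Nat.pos_of_ne_zero (left_ne_zero_of_mul (hde ▸ Nat.card_pos.ne'))
  refine Subgroup.eq_of_le_of_card_ge ?_ ?_
  · rintro _ ⟨x, rfl⟩
    simp [← pow_mul, hde, pow_card_eq_one']
  · rw [IsCyclic.card_powMonoidHom_ker, IsCyclic.card_powMonoidHom_range, ← hde,
      Nat.gcd_mul_left_left, Nat.gcd_mul_right_left, Nat.mul_div_cancel_left _ hd]

theorem FiniteField.norm_eq_one_iff_exists_pow_card_sub_one {K L : Type*} [Field K] [Field L]
    [Fintype K] [Fintype L] [Algebra K L] {s : L} (hs : s ≠ 0) :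
    Algebra.norm K s = 1 ↔ ∃ x : L, x ≠ 0 ∧ x ^ (Fintype.card K - 1) = s := by
  set e := (Fintype.card L - 1) / (Fintype.card K - 1)
  have hcard : (Fintype.card K - 1) * e = Nat.card Lˣ := by
    rw [Nat.card_units, Nat.card_eq_fintype_card]
    refine Nat.mul_div_cancel' ?_
    rw [Module.card_eq_pow_finrank (K := K) (V := L)]
    exact Nat.sub_one_dvd_pow_sub_one _ _
  have hnorm : Algebra.norm K s = 1 ↔ s ^ e = 1 := by
    rw [← (algebraMap K L).injective.eq_iff, FiniteField.algebraMap_norm_eq_pow, map_one,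
      ← Fintype.card_eq_nat_card, ← Fintype.card_eq_nat_card]
  have hrange := congrArg (Units.mk0 s hs ∈ ·) (IsCyclic.range_powMonoidHom_eq_ker hcard)
  simp only [MonoidHom.mem_range, MonoidHom.mem_ker, powMonoidHom_apply, Units.ext_iff,
    Units.val_pow_eq_pow_val, Units.val_mk0, Units.val_one, eq_iff_iff] at hrange
  rw [hnorm, ← hrange]
  constructor
  · rintro ⟨x, hx⟩
    exact ⟨x, x.ne_zero, hx⟩
  · rintro ⟨x, hx, hxs⟩
    exact ⟨Units.mk0 x hx, hxs⟩

theorem mul_eq_mul_pow_iff_eq_mul_pow_sub_one {M : Type*} [CommGroupWithZero M] {x a b : M}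
    (hx : x ≠ 0) {n : ℕ} (hn : 1 ≤ n) : x * a = b * x ^ n ↔ a = b * x ^ (n - 1) := by
  rw [← Nat.sub_add_cancel hn, pow_succ, ← mul_assoc, mul_comm x a, Nat.add_sub_cancel]
  exact mul_left_inj' hx

/-- Lemma: nontrivial-intersection criterion.
In `V = E^r` over `F`, with `H_c = { x·(1, c, …, c^{r-1}) }` and
`W_b = { y : y_{r-1} = b·y_0^q }`, for all `b, c ∈ E^×`:
`W_b ∩ H_c ≠ {0}` if and only if `c^{r-1} ∈ bΣ`, where
`Σ = { s ∈ E^× : N_{E/F}(s) = 1 }` is the norm-one subgroup. -/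
theorem Wb_meets_Hc_iff_norm_one_coset
    (q r : ℕ) (hr : 2 ≤ r)
    (F E : Type*) [Field F] [Fintype F] [Field E] [Fintype E] [Algebra F E]
    (hq : Fintype.card F = q)
    (b c : E) :
    (∃ v : Fin r → E, v ≠ 0 ∧
        v ⟨r - 1, by omega⟩ = b * (v ⟨0, by omega⟩) ^ q ∧
        ∃ x : E, v = fun k : Fin r => x * c ^ (k : ℕ))
      ↔ ∃ s : E, s ≠ 0 ∧ Algebra.norm F s = 1 ∧ c ^ (r - 1) = b * s := by
  subst hq
  have hq : 1 ≤ Fintype.card F := Fintype.card_pos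
  calc _ ↔ ∃ x : E, x ≠ 0 ∧ x * c ^ (r - 1) = b * x ^ Fintype.card F := by
        constructor
        · rintro ⟨v, hv, hvW, x, rfl⟩
          refine ⟨x, ?_, by simpa using hvW⟩
          rintro rfl
          exact hv (funext fun k => zero_mul _)
        · rintro ⟨x, hx, hxW⟩
          refine ⟨_, fun h => hx ?_, by simpa using hxW, x, rfl⟩
          simpa using congrFun h ⟨0, by omega⟩
    _ ↔ ∃ x : E, x ≠ 0 ∧ c ^ (r - 1) = b * x ^ (Fintype.card F - 1) :=
        exists_congr fun x => and_congr_right fun hx => mul_eq_mul_pow_iff_eq_mul_pow_sub_one hx hq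
    _ ↔ _ := by
        constructor
        · rintro ⟨x, hx, hcx⟩
          have hs := pow_ne_zero (Fintype.card F - 1) hx
          exact ⟨_, hs,
            (FiniteField.norm_eq_one_iff_exists_pow_card_sub_one hs).2 ⟨x, hx, rfl⟩, hcx⟩
        · rintro ⟨s, hs, hN, hcs⟩
          obtain ⟨x, hx, rfl⟩ := (FiniteField.norm_eq_one_iff_exists_pow_card_sub_one hs).1 hN
          exact ⟨x, hx, hcs⟩
end

section
/- Let q be a prime power and r ≥ 2, ℓ ≥ 1 integers, and regard V = 𝔽_{q^ℓ}^r as an 𝔽_q-vector space. For c ∈ 𝔽_{q^ℓ} let H_c := { x·(1, c, c², …, c^{r−1}) : x ∈ 𝔽_{q^ℓ} }, and for b ∈ 𝔽_{q^ℓ}^× let W_b := { (y_0, …, y_{r−1}) ∈ V : y_{r−1} = b·y_0^q }. Then for every b, c ∈ 𝔽_{q^ℓ}^×: if W_b ∩ H_c ≠ {0}, then dim_{𝔽_q}(W_b ∩ H_c) = 1. -/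
open Module Finset

/-- Lemma: nontrivial intersections of `W_b` with `H_c` are lines.
In `V = E^r` over `F`, let `W` be the `F`-subspace with underlying set
`W_b = { y : y_{r-1} = b·y_0^q }` and `HC` the `F`-subspace with underlying set
`H_c = { x·(1, c, …, c^{r-1}) }`, for `b, c ∈ E^×`. If `W ⊓ HC ≠ ⊥`, then
`dim_F (W ⊓ HC) = 1`. -/
theorem Wb_meets_Hc_dim_one
    (q r ℓ : ℕ) (hr : 2 ≤ r) (hℓ : 1 ≤ ℓ)
    (F E : Type*) [Field F] [Fintype F] [Field E] [Fintype E] [Algebra F E]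
    (hq : Fintype.card F = q) (hE : Fintype.card E = q ^ ℓ)
    (b c : E) (hb : b ≠ 0) (hc : c ≠ 0)
    (W HC : Submodule F (Fin r → E))
    (hWcar : (W : Set (Fin r → E))
      = {y : Fin r → E | y ⟨r - 1, by omega⟩ = b * (y ⟨0, by omega⟩) ^ q})
    (hHCcar : (HC : Set (Fin r → E))
      = {v : Fin r → E | ∃ x : E, v = fun k : Fin r => x * c ^ (k : ℕ)})
    (hne : W ⊓ HC ≠ ⊥) :
    finrank F ↥(W ⊓ HC) = 1 := by
  classical
  have hq2 : 2 ≤ q := hq ▸ Fintype.one_lt_card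
  -- the polynomial whose roots parametrize the intersection
  set p : Polynomial E :=
    Polynomial.C b * Polynomial.X ^ q - Polynomial.C (c ^ (r - 1)) * Polynomial.X with hp
  have h1 : (Polynomial.C b * Polynomial.X ^ q).natDegree = q := by
    simpa using Polynomial.natDegree_C_mul_X_pow q b hb
  have hdeg : p.natDegree = q := by
    rw [hp, Polynomial.natDegree_sub_eq_left_of_natDegree_lt, h1]
    rw [h1, Polynomial.natDegree_C_mul_X _ (pow_ne_zero _ hc)]
    omega
  have hp0 : p ≠ 0 := fun h => by simp [h] at hdeg; omega
  -- every element of the intersection gives a root of p via its 0-th coordinate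
  have key : ∀ v : (Fin r → E), v ∈ W ⊓ HC →
      (v = fun k : Fin r => v ⟨0, by omega⟩ * c ^ (k : ℕ)) ∧
      (v ⟨0, by omega⟩) ∈ p.roots.toFinset := by
    intro v hv
    obtain ⟨hvW, hvHC⟩ := hv
    have hvW' : v ⟨r - 1, by omega⟩ = b * (v ⟨0, by omega⟩) ^ q := by
      have := hWcar ▸ (hvW : v ∈ (W : Set (Fin r → E)))
      exact this
    obtain ⟨x, hx⟩ : ∃ x : E, v = fun k : Fin r => x * c ^ (k : ℕ) := by
      have := hHCcar ▸ (hvHC : v ∈ (HC : Set (Fin r → E)))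
      exact this
    have hx0 : v ⟨0, by omega⟩ = x := by rw [hx]; simp
    constructor
    · rw [hx0]; exact hx
    · rw [Multiset.mem_toFinset, Polynomial.mem_roots hp0]
      have hvr : v ⟨r - 1, by omega⟩ = x * c ^ (r - 1) := by rw [hx]
      rw [hx0, Polynomial.IsRoot.def, hp]
      simp only [Polynomial.eval_sub, Polynomial.eval_mul, Polynomial.eval_C,
        Polynomial.eval_pow, Polynomial.eval_X]
      have hbx : b * x ^ q = x * c ^ (r - 1) := by rw [← hx0, ← hvW', hvr, hx0]
      rw [hbx]; ring
  -- injection into the roots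
  have hinj : Function.Injective
      (fun v : ↥(W ⊓ HC) => (⟨(v : Fin r → E) ⟨0, by omega⟩,
        (key v v.2).2⟩ : {x // x ∈ p.roots.toFinset})) := by
    intro v w h
    have hv := (key v v.2).1
    have hw := (key w w.2).1
    have h0 : (v : Fin r → E) ⟨0, by omega⟩ = (w : Fin r → E) ⟨0, by omega⟩ :=
      congrArg Subtype.val h
    ext k
    rw [Subtype.ext_iff] at *
    calc (v : Fin r → E) k = (v : Fin r → E) ⟨0, by omega⟩ * c ^ (k : ℕ) := by
          conv_lhs => rw [hv]
      _ = (w : Fin r → E) ⟨0, by omega⟩ * c ^ (k : ℕ) := by rw [h0]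
      _ = (w : Fin r → E) k := by conv_rhs => rw [hw]
  have hcard : Fintype.card ↥(W ⊓ HC) ≤ q := by
    calc Fintype.card ↥(W ⊓ HC) ≤ Fintype.card {x // x ∈ p.roots.toFinset} :=
          Fintype.card_le_of_injective _ hinj
      _ = p.roots.toFinset.card := Fintype.card_coe _
      _ ≤ Multiset.card p.roots := Multiset.toFinset_card_le _
      _ ≤ p.natDegree := Polynomial.card_roots' p
      _ = q := hdeg
  have hcard' : Fintype.card ↥(W ⊓ HC) = q ^ finrank F ↥(W ⊓ HC) := by
    rw [← hq]; exact card_eq_pow_finrank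
  have hpos : 0 < finrank F ↥(W ⊓ HC) := by
    haveI : Nontrivial ↥(W ⊓ HC) := Submodule.nontrivial_iff_ne_bot.mpr hne
    exact finrank_pos
  have : q ^ finrank F ↥(W ⊓ HC) ≤ q ^ 1 := by
    rw [pow_one, ← hcard']; exact hcard
  have hle : finrank F ↥(W ⊓ HC) ≤ 1 :=
    (pow_le_pow_iff_right₀ (by omega : 1 < q)).mp this
  omega
end

section
/- Let q be a prime power and r ≥ 2, ℓ ≥ 1 integers with (r−1) ∣ (q−1). Regard V = 𝔽_{q^ℓ}^r as an 𝔽_q-vector space; for c ∈ 𝔽_{q^ℓ} let H_c := { x·(1, c, c², …, c^{r−1}) : x ∈ 𝔽_{q^ℓ} }, and for b ∈ 𝔽_{q^ℓ}^× let W_b := { (y_0, …, y_{r−1}) ∈ V : y_{r−1} = b·y_0^q }. Then for every d ∈ 𝔽_{q^ℓ}^×, the number of elements c ∈ 𝔽_{q^ℓ}^× with W_{d^{r−1}} ∩ H_c ≠ {0} is exactly (r−1)·(q^ℓ − 1)/(q − 1). -/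
open Module Finset

/-!
Writing `v = x • (1, c, …, c^{r-1})`, the block `H_c` meets `W_{d^{r-1}}` nontrivially iff
`x c^{r-1} = d^{r-1} x^q` for some `x ≠ 0`, i.e. iff `(c/d)^{r-1}` is a `(q-1)`-th power in the
cyclic group `E^×` of order `q^ℓ - 1`. The `(q-1)`-th powers form the kernel of `z ↦ z^{(q^ℓ-1)/(q-1)}`,
so the condition is `(c/d)^t = 1` with `t = (r-1)(q^ℓ-1)/(q-1)`; since `(r-1) ∣ (q-1)`, `t` divides
`q^ℓ - 1` and this equation has exactly `t` solutions.
-/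

namespace IsCyclic

variable {G : Type*} [CommGroup G] [Finite G] [IsCyclic G]

theorem exists_pow_eq_iff {k : ℕ} (hk : k ∣ Nat.card G) {z : G} :
    (∃ x, x ^ k = z) ↔ z ^ (Nat.card G / k) = 1 := by
  constructor
  · rintro ⟨x, rfl⟩
    rw [← pow_mul, Nat.mul_div_cancel' hk, pow_card_eq_one']
  · intro hz
    have hle : (powMonoidHom k : G →* G).range ≤ (powMonoidHom (Nat.card G / k)).ker := by
      rintro _ ⟨x, rfl⟩
      rw [MonoidHom.mem_ker, powMonoidHom_apply, powMonoidHom_apply, ← pow_mul,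
        Nat.mul_div_cancel' hk, pow_card_eq_one']
    have hcard : Nat.card (powMonoidHom (Nat.card G / k) : G →* G).ker ≤
        Nat.card (powMonoidHom k : G →* G).range := by
      rw [card_powMonoidHom_ker, card_powMonoidHom_range, Nat.gcd_eq_right hk,
        Nat.gcd_eq_right (Nat.div_dvd_of_dvd hk)]
    have hz : z ∈ (powMonoidHom (Nat.card G / k) : G →* G).ker := hz
    rw [← Subgroup.eq_of_le_of_card_ge hle hcard] at hz
    exact hz

theorem card_setOf_pow_eq_one {t : ℕ} (ht : t ∣ Nat.card G) :
    Nat.card {w : G | w ^ t = 1} = t := by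
  calc Nat.card {w : G | w ^ t = 1} = Nat.card (powMonoidHom t : G →* G).ker := rfl
    _ = t := by rw [card_powMonoidHom_ker, Nat.gcd_eq_right ht]

theorem card_setOf_exists_pow_eq {k m : ℕ} (hmk : m ∣ k) (hk : k ∣ Nat.card G) (a : G) :
    Nat.card {u : G | ∃ x, x ^ k = (u / a) ^ m} = m * (Nat.card G / k) := by
  have hdvd : m * (Nat.card G / k) ∣ Nat.card G := by
    simpa only [Nat.mul_div_cancel' hk] using Nat.mul_dvd_mul_right hmk (Nat.card G / k)
  rw [← card_setOf_pow_eq_one hdvd]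
  refine Nat.card_congr (Equiv.subtypeEquiv (Equiv.divRight a) fun u => ?_)
  rw [Set.mem_ofPred_eq, Set.mem_ofPred_eq, exists_pow_eq_iff hk, ← pow_mul, mul_comm]
  rfl

end IsCyclic

theorem mul_pow_eq_pow_mul_pow_iff {G : Type*} [CommGroup G] {q : ℕ} (hq : q ≠ 0)
    (m : ℕ) (a u x : G) : x * u ^ m = a ^ m * x ^ q ↔ x ^ (q - 1) = (u / a) ^ m := by
  obtain ⟨p, rfl⟩ := Nat.exists_eq_succ_of_ne_zero hq
  rw [Nat.succ_sub_one, pow_succ, div_pow, eq_div_iff_mul_eq', mul_comm _ x,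
    mul_left_comm, mul_right_inj, eq_comm, mul_comm (x ^ p)]

theorem exists_geom_vector_iff {M : Type*} [MonoidWithZero M] {r : ℕ} (i j : Fin r)
    (b c : M) (q : ℕ) :
    (∃ v : Fin r → M, v ≠ 0 ∧ v j = b * v i ^ q ∧ ∃ x : M, v = fun k : Fin r => x * c ^ (k : ℕ)) ↔
      ∃ x : M, x ≠ 0 ∧ x * c ^ (j : ℕ) = b * (x * c ^ (i : ℕ)) ^ q := by
  constructor
  · rintro ⟨_, hv, hvji, x, rfl⟩
    exact ⟨x, fun hx => hv (funext fun k => by simp [hx]), hvji⟩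
  · rintro ⟨x, hx, h⟩
    refine ⟨_, fun hv => hx ?_, h, x, rfl⟩
    simpa using congrFun hv ⟨0, i.pos⟩

theorem Wb_hits_exactly_one_block
    (q r ℓ : ℕ) (hr : 2 ≤ r) (hdvd : (r - 1) ∣ (q - 1))
    (E : Type*) [Field E] [Fintype E]
    (hE : Fintype.card E = q ^ ℓ)
    (d : E) (hd : d ≠ 0) :
    Nat.card {c : E | c ≠ 0 ∧
        ∃ v : Fin r → E, v ≠ 0 ∧
          v ⟨r - 1, by omega⟩ = d ^ (r - 1) * (v ⟨0, by omega⟩) ^ q ∧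
          ∃ x : E, v = fun k : Fin r => x * c ^ (k : ℕ)}
      = (r - 1) * ((q ^ ℓ - 1) / (q - 1)) := by
  have hq0 : q ≠ 0 := by
    rintro rfl
    have := Fintype.one_lt_card (α := E)
    rcases ℓ with _ | _ <;> simp_all
  have hunits : Nat.card Eˣ = q ^ ℓ - 1 := by
    classical
    rw [Nat.card_eq_fintype_card, Fintype.card_units, hE]
  have hqℓ : q - 1 ∣ Nat.card Eˣ := by
    simpa [hunits] using Nat.sub_dvd_pow_sub_pow q 1 ℓ
  set d' : Eˣ := Units.mk0 d hd
  rw [← hunits, ← IsCyclic.card_setOf_exists_pow_eq hdvd hqℓ d',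
    ← Nat.card_image_of_injective Units.val_injective]
  refine congrArg (fun s : Set E => Nat.card s) (Set.ext fun c => ?_)
  simp only [Set.mem_ofPred_eq, Set.mem_image, exists_geom_vector_iff, pow_zero, mul_one]
  constructor
  · rintro ⟨hc, x, hx, h⟩
    refine ⟨Units.mk0 c hc, ⟨Units.mk0 x hx, ?_⟩, rfl⟩
    rw [← mul_pow_eq_pow_mul_pow_iff hq0, Units.ext_iff]
    simpa [d'] using h
  · rintro ⟨u, ⟨x, hx⟩, rfl⟩
    refine ⟨u.ne_zero, x, x.ne_zero, ?_⟩
    simpa [d'] using congrArg Units.val ((mul_pow_eq_pow_mul_pow_iff hq0 _ _ _ _).2 hx)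
end
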